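/- arXiv:1606.01064 — 8 statements merged into one kernel-verified Lean document; each statement's English description precedes it below -/
import Mathlib

section
/- Define d̃(x,y) = inf{μ(B) : B is a closed ball containing both x and y}. Then there exists a constant C_b > 0 such that C_b^{-1}·μ(B(x,d(x,y))) ≤ d̃(x,y) ≤ μ(B(x,d(x,y))) for all x,y ∈ X. -/
open MeasureTheory Metric

/-- With `d̃(x,y) = inf{μ(B) : B a closed ball containing x and y}`, there is
`C_b > 0` such that `C_b⁻¹ μ(B(x,d(x,y))) ≤ d̃(x,y) ≤ μ(B(x,d(x,y)))`. -/
theorem dtilde_comparable_to_ball_measure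
    {X : Type*} [MetricSpace X] [MeasurableSpace X] [BorelSpace X]
    (μ : Measure X)
    (hvol : ∀ (x : X) (r : ℝ), 0 < r → 0 < (μ (closedBall x r)).toReal)
    (C : ℝ) (hC : 0 < C)
    (hdouble : ∀ (x : X) (r : ℝ), 0 < r →
      (μ (closedBall x (2 * r))).toReal ≤ C * (μ (closedBall x r)).toReal)
    (dt : X → X → ℝ)
    (hdt : ∀ x y : X, dt x y =
      sInf {m : ℝ | ∃ (z : X) (r : ℝ), x ∈ closedBall z r ∧ y ∈ closedBall z r ∧
        m = (μ (closedBall z r)).toReal}) :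
    ∃ Cb > (0 : ℝ), ∀ x y : X,
      Cb⁻¹ * (μ (closedBall x (dist x y))).toReal ≤ dt x y ∧
      dt x y ≤ (μ (closedBall x (dist x y))).toReal := by
  have hfin : ∀ (z : X) (r : ℝ), μ (closedBall z r) ≠ ⊤ := by
    intro z r
    have h1 : (0:ℝ) < max r 1 := lt_max_of_lt_right one_pos
    have h2 := hvol z (max r 1) h1
    intro hinf
    have hle : μ (closedBall z (max r 1)) = ⊤ :=
      top_le_iff.mp (hinf ▸ measure_mono (closedBall_subset_closedBall (le_max_left r 1)))
    rw [hle] at h2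
    simp at h2
  set Cb : ℝ := max (C^2) 1 with hCbdef
  have hCb1 : (1:ℝ) ≤ Cb := le_max_right _ _
  have hCbC : C^2 ≤ Cb := le_max_left _ _
  have hCbpos : (0:ℝ) < Cb := lt_of_lt_of_le one_pos hCb1
  refine ⟨Cb, hCbpos, fun x y => ?_⟩
  have hmem : (μ (closedBall x (dist x y))).toReal ∈
      {m : ℝ | ∃ (z : X) (r : ℝ), x ∈ closedBall z r ∧ y ∈ closedBall z r ∧
        m = (μ (closedBall z r)).toReal} := by
    refine ⟨x, dist x y, ?_, ?_, rfl⟩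
    · simpa [mem_closedBall] using dist_nonneg
    · simp [mem_closedBall, dist_comm]
  have hbdd : BddBelow {m : ℝ | ∃ (z : X) (r : ℝ), x ∈ closedBall z r ∧ y ∈ closedBall z r ∧
        m = (μ (closedBall z r)).toReal} := by
    refine ⟨0, ?_⟩
    rintro m ⟨z, r, _, _, rfl⟩
    exact ENNReal.toReal_nonneg
  constructor
  · rw [hdt]
    apply le_csInf ⟨_, hmem⟩
    rintro m ⟨z, r, hx, hy, rfl⟩
    rw [inv_mul_le_iff₀ hCbpos]
    rcases eq_or_lt_of_le (dist_nonneg : (0:ℝ) ≤ dist x y) with h0 | hpos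
    · have hsub : closedBall x (dist x y) ⊆ closedBall z r := by
        rw [← h0, closedBall_zero]
        simpa using hx
      have hA : (μ (closedBall x (dist x y))).toReal ≤ (μ (closedBall z r)).toReal :=
        ENNReal.toReal_mono (hfin z r) (measure_mono hsub)
      calc (μ (closedBall x (dist x y))).toReal ≤ (μ (closedBall z r)).toReal := hA
        _ ≤ Cb * (μ (closedBall z r)).toReal :=
            le_mul_of_one_le_left ENNReal.toReal_nonneg hCb1
    · have hxz : dist x z ≤ r := mem_closedBall.mp hx
      have hyz : dist y z ≤ r := mem_closedBall.mp hy
      have h2r : dist x y ≤ 2 * r := by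
        calc dist x y ≤ dist x z + dist z y := dist_triangle x z y
          _ ≤ r + r := add_le_add hxz (by rwa [dist_comm])
          _ = 2 * r := by ring
      have hr : 0 < r := by linarith
      have hsub : closedBall x (dist x y) ⊆ closedBall z (2 * (2 * r)) := by
        intro w hw
        have hwx : dist w x ≤ dist x y := mem_closedBall.mp hw
        have : dist w z ≤ dist w x + dist x z := dist_triangle w x z
        simp only [mem_closedBall]
        linarith
      have hA : (μ (closedBall x (dist x y))).toReal ≤
          (μ (closedBall z (2 * (2 * r)))).toReal :=
        ENNReal.toReal_mono (hfin z _) (measure_mono hsub)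
      have hB := hdouble z (2 * r) (by linarith)
      have hD := hdouble z r hr
      have hmnn : (0:ℝ) ≤ (μ (closedBall z r)).toReal := ENNReal.toReal_nonneg
      calc (μ (closedBall x (dist x y))).toReal
          ≤ (μ (closedBall z (2 * (2 * r)))).toReal := hA
        _ ≤ C * (μ (closedBall z (2 * r))).toReal := hB
        _ ≤ C * (C * (μ (closedBall z r)).toReal) :=
            mul_le_mul_of_nonneg_left hD (le_of_lt hC)
        _ = C^2 * (μ (closedBall z r)).toReal := by ring
        _ ≤ Cb * (μ (closedBall z r)).toReal := mul_le_mul_of_nonneg_right hCbC hmnn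
  · rw [hdt]
    exact csInf_le hbdd hmem
end

section
/- Define d̃(x,y) = inf{μ(B) : B a closed ball containing x and y}. Then d̃ is a quasi-metric: there exists A₁ > 0 such that d̃(x,y) ≤ A₁(d̃(x,z) + d̃(z,y)) for all x,y,z ∈ X. -/
/-!
If `x, z` lie in a closed ball `B(c₁, r₁)` and `z, y` in `B(c₂, r₂)` with `r₂ ≤ r₁`, then
`x, y ∈ B(c₁, 4 r₁)`, and two applications of doubling give `μ B(c₁, 4 r₁) ≤ C² μ B(c₁, r₁)`.
Hence `d̃(x, y) ≤ C² (μ B₁ + μ B₂)` for any such pair of balls, and taking infima over both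
balls gives the quasi-triangle inequality with `A₁ = C²`.
-/

open MeasureTheory Metric

theorem le_mul_csInf_add_csInf {s t : Set ℝ} {c K : ℝ} (hK : 0 < K)
    (hs₀ : s.Nonempty) (hs₁ : BddBelow s) (ht₀ : t.Nonempty) (ht₁ : BddBelow t)
    (h : ∀ a ∈ s, ∀ b ∈ t, c ≤ K * (a + b)) : c ≤ K * (sInf s + sInf t) := by
  rw [← csInf_add hs₀ hs₁ ht₀ ht₁, ← div_le_iff₀' hK]
  refine le_csInf (hs₀.add ht₀) ?_
  rintro _ ⟨a, ha, b, hb, rfl⟩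
  exact (div_le_iff₀' hK).2 (h a ha b hb)

section ClosedBallMeasures

variable {X : Type*} [MetricSpace X] [MeasurableSpace X]

/-- `d̃(x, y)` is the infimum of this set. -/
def closedBallMeasures (μ : Measure X) (x y : X) : Set ℝ :=
  {m | ∃ (c : X) (r : ℝ), x ∈ closedBall c r ∧ y ∈ closedBall c r ∧
    m = (μ (closedBall c r)).toReal}

namespace closedBallMeasures

variable (μ : Measure X)

theorem comm (x y : X) : closedBallMeasures μ x y = closedBallMeasures μ y x := by
  ext m
  constructor <;> exact fun ⟨c, r, h₁, h₂, hm⟩ => ⟨c, r, h₂, h₁, hm⟩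

theorem nonempty (x y : X) : (closedBallMeasures μ x y).Nonempty :=
  ⟨_, x, dist y x, mem_closedBall_self dist_nonneg, mem_closedBall.2 le_rfl, rfl⟩

theorem bddBelow (x y : X) : BddBelow (closedBallMeasures μ x y) :=
  ⟨0, by rintro _ ⟨c, r, -, -, rfl⟩; exact ENNReal.toReal_nonneg⟩

end closedBallMeasures

variable {μ : Measure X} {C : ℝ}

theorem one_le_of_toReal_measure_closedBall_two_mul_le {x : X} {r : ℝ} (hr : 0 ≤ r)
    (hfin : μ (closedBall x (2 * r)) ≠ ⊤) (hpos : 0 < (μ (closedBall x r)).toReal)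
    (h : (μ (closedBall x (2 * r))).toReal ≤ C * (μ (closedBall x r)).toReal) : 1 ≤ C := by
  have hmono : (μ (closedBall x r)).toReal ≤ (μ (closedBall x (2 * r))).toReal :=
    ENNReal.toReal_mono hfin (measure_mono (closedBall_subset_closedBall (by linarith)))
  exact le_of_mul_le_mul_right (by linarith) hpos

theorem toReal_measure_closedBall_four_mul_le (hC : 1 ≤ C)
    (hdouble : ∀ (x : X) (r : ℝ), 0 < r →
      (μ (closedBall x (2 * r))).toReal ≤ C * (μ (closedBall x r)).toReal)
    {c : X} {r : ℝ} (hr : 0 ≤ r) :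
    (μ (closedBall c (4 * r))).toReal ≤ C ^ 2 * (μ (closedBall c r)).toReal := by
  rcases hr.eq_or_lt with rfl | hr
  · rw [mul_zero]
    exact le_mul_of_one_le_left ENNReal.toReal_nonneg (one_le_pow₀ hC)
  calc (μ (closedBall c (4 * r))).toReal
      = (μ (closedBall c (2 * (2 * r)))).toReal := by ring_nf
    _ ≤ C * (μ (closedBall c (2 * r))).toReal := hdouble c _ (by positivity)
    _ ≤ C * (C * (μ (closedBall c r)).toReal) := by gcongr; exact hdouble c r hr
    _ = C ^ 2 * (μ (closedBall c r)).toReal := by ring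

theorem sInf_closedBallMeasures_le_of_chain (hC : 1 ≤ C)
    (hdouble : ∀ (x : X) (r : ℝ), 0 < r →
      (μ (closedBall x (2 * r))).toReal ≤ C * (μ (closedBall x r)).toReal)
    {x y z c₁ c₂ : X} {r₁ r₂ : ℝ}
    (hx : x ∈ closedBall c₁ r₁) (hz₁ : z ∈ closedBall c₁ r₁)
    (hz₂ : z ∈ closedBall c₂ r₂) (hy : y ∈ closedBall c₂ r₂) (hr : r₂ ≤ r₁) :
    sInf (closedBallMeasures μ x y) ≤ C ^ 2 * (μ (closedBall c₁ r₁)).toReal := by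
  rw [mem_closedBall] at hx hz₁ hz₂ hy
  have hr₁ : 0 ≤ r₁ := dist_nonneg.trans hz₁
  have hy₁ : dist y c₁ ≤ 4 * r₁ := by
    linarith [dist_triangle y z c₁, dist_triangle_right y z c₂]
  calc sInf (closedBallMeasures μ x y)
      ≤ (μ (closedBall c₁ (4 * r₁))).toReal :=
        csInf_le (closedBallMeasures.bddBelow μ x y)
          ⟨c₁, 4 * r₁, mem_closedBall.2 (by linarith), mem_closedBall.2 hy₁, rfl⟩
    _ ≤ C ^ 2 * (μ (closedBall c₁ r₁)).toReal :=
        toReal_measure_closedBall_four_mul_le hC hdouble hr₁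

theorem sInf_closedBallMeasures_le_mul_add (hC : 1 ≤ C)
    (hdouble : ∀ (x : X) (r : ℝ), 0 < r →
      (μ (closedBall x (2 * r))).toReal ≤ C * (μ (closedBall x r)).toReal)
    {x y z : X} {m₁ m₂ : ℝ}
    (hm₁ : m₁ ∈ closedBallMeasures μ x z) (hm₂ : m₂ ∈ closedBallMeasures μ z y) :
    sInf (closedBallMeasures μ x y) ≤ C ^ 2 * (m₁ + m₂) := by
  obtain ⟨c₁, r₁, hx, hz₁, rfl⟩ := hm₁
  obtain ⟨c₂, r₂, hz₂, hy, rfl⟩ := hm₂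
  rcases le_total r₂ r₁ with hr | hr
  · calc _ ≤ C ^ 2 * (μ (closedBall c₁ r₁)).toReal :=
          sInf_closedBallMeasures_le_of_chain hC hdouble hx hz₁ hz₂ hy hr
      _ ≤ _ := by gcongr; exact le_add_of_nonneg_right ENNReal.toReal_nonneg
  · calc _ = sInf (closedBallMeasures μ y x) := by rw [closedBallMeasures.comm]
      _ ≤ C ^ 2 * (μ (closedBall c₂ r₂)).toReal :=
          sInf_closedBallMeasures_le_of_chain hC hdouble hy hz₂ hz₁ hx hr
      _ ≤ _ := by gcongr; exact le_add_of_nonneg_left ENNReal.toReal_nonneg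

end ClosedBallMeasures

theorem dtilde_quasi_metric_general
    {X : Type*} [MetricSpace X] [MeasurableSpace X]
    (μ : Measure X)
    (hvol : ∀ (x : X) (r : ℝ), 0 < r → 0 < (μ (closedBall x r)).toReal)
    (C : ℝ) (hC : 0 < C)
    (hdouble : ∀ (x : X) (r : ℝ), 0 < r →
      (μ (closedBall x (2 * r))).toReal ≤ C * (μ (closedBall x r)).toReal)
    (dt : X → X → ℝ)
    (hdt : ∀ x y : X, dt x y =
      sInf {m : ℝ | ∃ (z : X) (r : ℝ), x ∈ closedBall z r ∧ y ∈ closedBall z r ∧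
        m = (μ (closedBall z r)).toReal}) :
    ∃ A₁ > (0 : ℝ), ∀ x y z : X, dt x y ≤ A₁ * (dt x z + dt z y) := by
  refine ⟨C ^ 2, by positivity, fun x y z => ?_⟩
  have hC1 : 1 ≤ C :=
    one_le_of_toReal_measure_closedBall_two_mul_le zero_le_one
      (ENNReal.toReal_pos_iff.1 (hvol x (2 * 1) (by norm_num))).2.ne
      (hvol x 1 one_pos) (hdouble x 1 one_pos)
  simp only [hdt]
  exact le_mul_csInf_add_csInf (by positivity)
    (closedBallMeasures.nonempty μ x z) (closedBallMeasures.bddBelow μ x z)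
    (closedBallMeasures.nonempty μ z y) (closedBallMeasures.bddBelow μ z y)
    fun _ hm₁ _ hm₂ => sInf_closedBallMeasures_le_mul_add hC1 hdouble hm₁ hm₂

/-- `d̃(x,y) = inf{μ(B) : B a closed ball containing x and y}` is a quasi-metric:
there is `A₁ > 0` with `d̃(x,y) ≤ A₁(d̃(x,z) + d̃(z,y))`. -/
theorem dtilde_quasi_metric
    {X : Type*} [MetricSpace X] [MeasurableSpace X] [BorelSpace X]
    (μ : Measure X)
    (hvol : ∀ (x : X) (r : ℝ), 0 < r → 0 < (μ (closedBall x r)).toReal)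
    (C : ℝ) (hC : 0 < C)
    (hdouble : ∀ (x : X) (r : ℝ), 0 < r →
      (μ (closedBall x (2 * r))).toReal ≤ C * (μ (closedBall x r)).toReal)
    (dt : X → X → ℝ)
    (hdt : ∀ x y : X, dt x y =
      sInf {m : ℝ | ∃ (z : X) (r : ℝ), x ∈ closedBall z r ∧ y ∈ closedBall z r ∧
        m = (μ (closedBall z r)).toReal}) :
    ∃ A₁ > (0 : ℝ), ∀ x y z : X, dt x y ≤ A₁ * (dt x z + dt z y) :=
  dtilde_quasi_metric_general μ hvol C hC hdouble dt hdt
end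

section
/- Suppose μ has no atoms, μ(X) = ∞, and μ is doubling. Define d̃(x,y) = inf{μ(B) : B a closed ball containing x and y} and let B̃(x,r) = {y : d̃(x,y) ≤ r}. Then μ(B̃(x,r)) ≃ r, i.e., there is C > 0 with C^{-1}·r ≤ μ(B̃(x,r)) ≤ C·r for all x ∈ X and r > 0. -/
/-!
Since `μ` has no atoms, is infinite and finite on balls, `ρ ↦ μ(B(x, ρ))` starts at `0`, is
right-continuous and tends to `∞`, so for every `t > 0` some radius `ρ` has
`μ(B(x, ρ)) ≤ t < μ(B(x, 2ρ)) ≤ C μ(B(x, ρ))`. For `t = r` the ball `B(x, ρ)` lies in `B̃(x, r)`,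
giving the lower bound. Conversely, if `d̃(x, y) ≤ r` then `x, y` lie in a ball `B(z, s)` of measure
`< 2r`, and doubling twice gives `μ(B(x, 2s)) < 2C²r`; taking `t = 2C²r` this forces `s ≤ ρ`, so
`B̃(x, r) ⊆ B(x, 2ρ)`, a ball of measure at most `2C³r`.
-/

open MeasureTheory Metric Filter Topology Set
open scoped ENNReal

theorem Monotone.exists_pos_le_lt_two_mul {α : Type*} [LinearOrder α] {f : ℝ → α}
    (hf : Monotone f) {t : α} (hsmall : ∃ ρ > 0, f ρ ≤ t) (hlarge : ∃ R, t < f R) :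
    ∃ ρ > 0, f ρ ≤ t ∧ t < f (2 * ρ) := by
  obtain ⟨ρ₁, hρ₁, hρ₁t⟩ := hsmall
  obtain ⟨R, hR⟩ := hlarge
  set S : Set ℝ := {ρ | 0 < ρ ∧ f ρ ≤ t}
  have hρ₁S : ρ₁ ∈ S := ⟨hρ₁, hρ₁t⟩
  have hbdd : BddAbove S := ⟨R, fun ρ hρ => (hf.reflect_lt (hρ.2.trans_lt hR)).le⟩
  have hpos : 0 < sSup S := hρ₁.trans_le (le_csSup hbdd hρ₁S)
  obtain ⟨ρ, ⟨hρ, hρt⟩, hhalf⟩ := exists_lt_of_lt_csSup ⟨ρ₁, hρ₁S⟩ (half_lt_self hpos)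
  refine ⟨ρ, hρ, hρt, lt_of_not_ge fun h => ?_⟩
  have : 2 * ρ ≤ sSup S := le_csSup hbdd ⟨by positivity, h⟩
  linarith

section Measure

variable {X : Type*} [MetricSpace X] [MeasurableSpace X] (μ : Measure X)

theorem monotone_measure_closedBall (x : X) : Monotone fun r => μ (closedBall x r) :=
  fun _ _ h => measure_mono (closedBall_subset_closedBall h)

theorem exists_pos_measure_closedBall_lt [OpensMeasurableSpace X] {x : X} {ε : ℝ≥0∞}
    (hx : μ {x} < ε) (hfin : ∃ R > 0, μ (closedBall x R) ≠ ∞) :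
    ∃ ρ > 0, μ (closedBall x ρ) < ε := by
  have hcont : Tendsto (fun r => μ (closedBall x r)) (𝓝[>] 0) (𝓝 (μ {x})) := by
    rw [← closedBall_zero, ← biInter_gt_closedBall]
    exact tendsto_measure_biInter_gt (fun _ _ => measurableSet_closedBall.nullMeasurableSet)
      (fun _ _ _ h => closedBall_subset_closedBall h) hfin
  exact ((hcont.eventually (gt_mem_nhds hx)).and self_mem_nhdsWithin).exists.imp
    fun ρ h => ⟨h.2, h.1⟩

theorem exists_lt_measure_closedBall {x : X} {t : ℝ≥0∞} (ht : t < μ univ) :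
    ∃ R, t < μ (closedBall x R) := by
  have hmono : Monotone fun n : ℕ => closedBall x n :=
    fun _ _ h => closedBall_subset_closedBall (Nat.cast_le.mpr h)
  rw [← iUnion_closedBall_nat x, hmono.measure_iUnion, lt_iSup_iff] at ht
  obtain ⟨n, hn⟩ := ht
  exact ⟨n, hn⟩

theorem exists_pos_toReal_measure_closedBall_le_lt_two_mul [OpensMeasurableSpace X] {x : X}
    (hx : μ {x} = 0) (hinf : μ univ = ∞) (hfin : ∀ r > 0, μ (closedBall x r) ≠ ∞)
    {t : ℝ} (ht : 0 < t) :
    ∃ ρ > 0, (μ (closedBall x ρ)).toReal ≤ t ∧ t < (μ (closedBall x (2 * ρ))).toReal := by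
  obtain ⟨ρ₁, hρ₁, hρ₁t⟩ := exists_pos_measure_closedBall_lt μ
    (hx.trans_lt (ENNReal.ofReal_pos.mpr ht)) ⟨1, one_pos, hfin 1 one_pos⟩
  obtain ⟨ρ, hρ, hle, hlt⟩ := (monotone_measure_closedBall μ x).exists_pos_le_lt_two_mul
    ⟨ρ₁, hρ₁, hρ₁t.le⟩ (exists_lt_measure_closedBall μ (hinf ▸ ENNReal.ofReal_lt_top))
  exact ⟨ρ, hρ, ENNReal.toReal_le_of_le_ofReal ht.le hle,
    (ENNReal.ofReal_lt_iff_lt_toReal ht.le (hfin _ (by positivity))).mp hlt⟩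

end Measure

section BallMeasureDist

variable {X : Type*} [MetricSpace X] [MeasurableSpace X] (μ : Measure X)

noncomputable def ballMeasureDist (x y : X) : ℝ :=
  sInf {m : ℝ | ∃ (z : X) (r : ℝ), x ∈ closedBall z r ∧ y ∈ closedBall z r ∧
    m = (μ (closedBall z r)).toReal}

variable {μ}

theorem ballMeasureDist_le {x y z : X} {r : ℝ} (hx : x ∈ closedBall z r)
    (hy : y ∈ closedBall z r) : ballMeasureDist μ x y ≤ (μ (closedBall z r)).toReal :=
  csInf_le ⟨0, by rintro _ ⟨_, _, _, _, rfl⟩; exact ENNReal.toReal_nonneg⟩ ⟨z, r, hx, hy, rfl⟩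

theorem exists_closedBall_of_ballMeasureDist_lt {x y : X} {m : ℝ}
    (h : ballMeasureDist μ x y < m) : ∃ (z : X) (r : ℝ), x ∈ closedBall z r ∧
      y ∈ closedBall z r ∧ (μ (closedBall z r)).toReal < m := by
  have hne : {m : ℝ | ∃ (z : X) (r : ℝ), x ∈ closedBall z r ∧ y ∈ closedBall z r ∧
      m = (μ (closedBall z r)).toReal}.Nonempty :=
    ⟨_, x, dist y x, mem_closedBall_self dist_nonneg, mem_closedBall.mpr le_rfl, rfl⟩
  obtain ⟨_, ⟨z, r, hx, hy, rfl⟩, hlt⟩ := exists_lt_of_csInf_lt hne h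
  exact ⟨z, r, hx, hy, hlt⟩

theorem closedBall_subset_setOf_ballMeasureDist_le {x : X} {ρ r : ℝ}
    (h : (μ (closedBall x ρ)).toReal ≤ r) : closedBall x ρ ⊆ {y | ballMeasureDist μ x y ≤ r} :=
  fun _ hy => (ballMeasureDist_le (mem_closedBall_self (dist_nonneg.trans hy)) hy).trans h

end BallMeasureDist

section Doubling

variable {X : Type*} [MetricSpace X] [MeasurableSpace X] {μ : Measure X}
  (hfin : ∀ (x : X) (r : ℝ), 0 < r → μ (closedBall x r) ≠ ∞)
include hfin

theorem toReal_measure_closedBall_mono {x : X} {r₁ r₂ : ℝ} (h₂ : 0 < r₂) (h : r₁ ≤ r₂) :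
    (μ (closedBall x r₁)).toReal ≤ (μ (closedBall x r₂)).toReal :=
  ENNReal.toReal_mono (hfin x r₂ h₂) (monotone_measure_closedBall μ x h)

variable {C : ℝ} (hC : 0 < C) (hdouble : ∀ (x : X) (r : ℝ), 0 < r →
  (μ (closedBall x (2 * r))).toReal ≤ C * (μ (closedBall x r)).toReal)
include hC hdouble

theorem toReal_measure_closedBall_two_mul_le_of_mem {x z : X} {s : ℝ} (hs : 0 < s)
    (hx : x ∈ closedBall z s) :
    (μ (closedBall x (2 * s))).toReal ≤ C ^ 2 * (μ (closedBall z s)).toReal := by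
  have hsub : closedBall x (2 * s) ⊆ closedBall z (2 * (2 * s)) :=
    closedBall_subset_closedBall' (by rw [mem_closedBall] at hx; linarith)
  calc (μ (closedBall x (2 * s))).toReal
      ≤ (μ (closedBall z (2 * (2 * s)))).toReal :=
        ENNReal.toReal_mono (hfin z _ (by positivity)) (measure_mono hsub)
    _ ≤ C * (μ (closedBall z (2 * s))).toReal := hdouble z _ (by positivity)
    _ ≤ C * (C * (μ (closedBall z s)).toReal) := by gcongr; exact hdouble z s hs
    _ = C ^ 2 * (μ (closedBall z s)).toReal := by ring

theorem setOf_ballMeasureDist_le_subset_closedBall {x : X} {r ρ : ℝ} (hr : 0 < r) (hρ : 0 < ρ)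
    (hρr : 2 * C ^ 2 * r < (μ (closedBall x (2 * ρ))).toReal) :
    {y | ballMeasureDist μ x y ≤ r} ⊆ closedBall x (2 * ρ) := by
  intro y (hy : ballMeasureDist μ x y ≤ r)
  obtain ⟨z, s, hxz, hyz, hzs⟩ :=
    exists_closedBall_of_ballMeasureDist_lt (show ballMeasureDist μ x y < 2 * r by linarith)
  have hsρ : s ≤ ρ := by
    by_contra! hρs
    have hs : 0 < s := hρ.trans hρs
    have := calc (μ (closedBall x (2 * ρ))).toReal
        ≤ (μ (closedBall x (2 * s))).toReal :=
          toReal_measure_closedBall_mono hfin (by positivity) (by linarith)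
      _ ≤ C ^ 2 * (μ (closedBall z s)).toReal :=
          toReal_measure_closedBall_two_mul_le_of_mem hfin hC hdouble hs hxz
      _ < C ^ 2 * (2 * r) := by gcongr
    linarith
  rw [mem_closedBall] at hxz hyz ⊢
  linarith [dist_triangle_right y x z]

end Doubling

section Comparison

variable {X : Type*} [MetricSpace X] [MeasurableSpace X] [OpensMeasurableSpace X] {μ : Measure X}
  {C : ℝ} {x : X} {r : ℝ}

theorem exists_closedBall_subset_setOf_ballMeasureDist_le (hna : ∀ x : X, μ {x} = 0)
    (hinf : μ univ = ∞) (hfin : ∀ (x : X) (r : ℝ), 0 < r → μ (closedBall x r) ≠ ∞)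
    (hdouble : ∀ (x : X) (r : ℝ), 0 < r →
      (μ (closedBall x (2 * r))).toReal ≤ C * (μ (closedBall x r)).toReal) (hr : 0 < r) :
    ∃ ρ, closedBall x ρ ⊆ {y | ballMeasureDist μ x y ≤ r} ∧
      r ≤ C * (μ (closedBall x ρ)).toReal := by
  obtain ⟨ρ, hρ, hρr, hrρ⟩ :=
    exists_pos_toReal_measure_closedBall_le_lt_two_mul μ (hna x) hinf (hfin x) hr
  exact ⟨ρ, closedBall_subset_setOf_ballMeasureDist_le hρr, hrρ.le.trans (hdouble x ρ hρ)⟩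

theorem exists_closedBall_superset_setOf_ballMeasureDist_le (hna : ∀ x : X, μ {x} = 0)
    (hinf : μ univ = ∞) (hfin : ∀ (x : X) (r : ℝ), 0 < r → μ (closedBall x r) ≠ ∞)
    (hC : 0 < C) (hdouble : ∀ (x : X) (r : ℝ), 0 < r →
      (μ (closedBall x (2 * r))).toReal ≤ C * (μ (closedBall x r)).toReal) (hr : 0 < r) :
    ∃ R > 0, {y | ballMeasureDist μ x y ≤ r} ⊆ closedBall x R ∧
      (μ (closedBall x R)).toReal ≤ 2 * C ^ 3 * r := by
  obtain ⟨ρ, hρ, hρr, hrρ⟩ := exists_pos_toReal_measure_closedBall_le_lt_two_mul μ (hna x) hinf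
    (hfin x) (t := 2 * C ^ 2 * r) (by positivity)
  refine ⟨2 * ρ, by positivity,
    setOf_ballMeasureDist_le_subset_closedBall hfin hC hdouble hr hρ hrρ, ?_⟩
  calc (μ (closedBall x (2 * ρ))).toReal ≤ C * (μ (closedBall x ρ)).toReal := hdouble x ρ hρ
    _ ≤ C * (2 * C ^ 2 * r) := by gcongr
    _ = 2 * C ^ 3 * r := by ring

end Comparison

/-- If `μ` has no atoms, `μ(X) = ∞`, and `μ` is doubling, then for the quasi-metric
`d̃(x,y) = inf{μ(B) : B a closed ball containing x and y}` one has
`μ(B̃(x,r)) ≃ r`. -/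
theorem dtilde_ball_measure_comparable_radius
    {X : Type*} [MetricSpace X] [MeasurableSpace X] [BorelSpace X]
    (μ : Measure X)
    (hvol : ∀ (x : X) (r : ℝ), 0 < r → 0 < (μ (closedBall x r)).toReal)
    (hna : ∀ x : X, μ {x} = 0)
    (hinf : μ Set.univ = ⊤)
    (C : ℝ) (hC : 0 < C)
    (hdouble : ∀ (x : X) (r : ℝ), 0 < r →
      (μ (closedBall x (2 * r))).toReal ≤ C * (μ (closedBall x r)).toReal)
    (dt : X → X → ℝ)
    (hdt : ∀ x y : X, dt x y =
      sInf {m : ℝ | ∃ (z : X) (r : ℝ), x ∈ closedBall z r ∧ y ∈ closedBall z r ∧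
        m = (μ (closedBall z r)).toReal}) :
    ∃ C' > (0 : ℝ), ∀ (x : X) (r : ℝ), 0 < r →
      C'⁻¹ * r ≤ (μ {y : X | dt x y ≤ r}).toReal ∧
      (μ {y : X | dt x y ≤ r}).toReal ≤ C' * r := by
  obtain rfl : dt = ballMeasureDist μ := funext fun x => funext (hdt x)
  have hfin : ∀ (x : X) (r : ℝ), 0 < r → μ (closedBall x r) ≠ ∞ :=
    fun x r hr => (ENNReal.toReal_pos_iff.mp (hvol x r hr)).2.ne
  refine ⟨max C (2 * C ^ 3), by positivity, fun x r hr => ?_⟩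
  obtain ⟨ρ, hsubρ, hrρ⟩ :=
    exists_closedBall_subset_setOf_ballMeasureDist_le (x := x) hna hinf hfin hdouble hr
  obtain ⟨R, hR, hsubR, hRr⟩ :=
    exists_closedBall_superset_setOf_ballMeasureDist_le (x := x) hna hinf hfin hC hdouble hr
  have hball_fin : μ {y | ballMeasureDist μ x y ≤ r} ≠ ∞ :=
    measure_ne_top_of_subset hsubR (hfin x R hR)
  have hlower : r ≤ C * (μ {y | ballMeasureDist μ x y ≤ r}).toReal :=
    hrρ.trans (by gcongr)
  have hupper : (μ {y | ballMeasureDist μ x y ≤ r}).toReal ≤ 2 * C ^ 3 * r :=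
    (ENNReal.toReal_mono (hfin x R hR) (measure_mono hsubR)).trans hRr
  constructor
  · calc (max C (2 * C ^ 3))⁻¹ * r ≤ C⁻¹ * r := by gcongr; exact le_max_left _ _
      _ ≤ _ := by rw [inv_mul_le_iff₀ hC]; exact hlower
  · exact hupper.trans (by gcongr; exact le_max_right _ _)
end

section
/- Suppose μ has no atoms, μ(X) = ∞, and μ is doubling. For every x ∈ X and R > 0 there exists r > 0 such that B(x,R) ⊆ B̃(x,r) and μ(B̃(x,r)) ≤ C·μ(B(x,R)), where C depends only on the doubling constant. -/
open MeasureTheory Metric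

/-- If `μ` has no atoms, `μ(X) = ∞`, and `μ` is doubling, then every metric ball
`B(x,R)` is contained in a `d̃`-ball `B̃(x,r)` of comparable measure. -/
theorem metric_ball_inside_dtilde_ball
    {X : Type*} [MetricSpace X] [MeasurableSpace X] [BorelSpace X]
    (μ : Measure X)
    (hvol : ∀ (x : X) (r : ℝ), 0 < r → 0 < (μ (closedBall x r)).toReal)
    (hna : ∀ x : X, μ {x} = 0)
    (hinf : μ Set.univ = ⊤)
    (C : ℝ) (hC : 0 < C)
    (hdouble : ∀ (x : X) (r : ℝ), 0 < r →
      (μ (closedBall x (2 * r))).toReal ≤ C * (μ (closedBall x r)).toReal)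
    (dt : X → X → ℝ)
    (hdt : ∀ x y : X, dt x y =
      sInf {m : ℝ | ∃ (z : X) (r : ℝ), x ∈ closedBall z r ∧ y ∈ closedBall z r ∧
        m = (μ (closedBall z r)).toReal}) :
    ∃ C' > (0 : ℝ), ∀ (x : X) (R : ℝ), 0 < R → ∃ r > (0 : ℝ),
      closedBall x R ⊆ {y : X | dt x y ≤ r} ∧
      (μ {y : X | dt x y ≤ r}).toReal ≤ C' * (μ (closedBall x R)).toReal := by
  -- all closed balls of positive radius have finite measure
  have hfin : ∀ (z : X) (s : ℝ), 0 < s → μ (closedBall z s) ≠ ⊤ := by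
    intro z s hs h
    have := hvol z s hs
    simp [h] at this
  refine ⟨2 * C ^ 3, by positivity, ?_⟩
  intro x R hR
  set r : ℝ := (μ (closedBall x R)).toReal with hrdef
  have hr : 0 < r := hvol x R hR
  -- C ≥ 1
  have h1C : 1 ≤ C := by
    have h2 := hdouble x R hR
    have hmono : r ≤ (μ (closedBall x (2 * R))).toReal :=
      ENNReal.toReal_mono (hfin x (2 * R) (by linarith))
        (measure_mono (closedBall_subset_closedBall (by linarith)))
    nlinarith
  -- there is an n with μ(B(x, R·2^n)) > 2Cr
  have hex : ∃ n : ℕ, 2 * C * r < (μ (closedBall x (R * 2 ^ n))).toReal := by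
    by_contra h
    push_neg at h
    have hub : ∀ n : ℕ, μ (closedBall x (R * 2 ^ n)) ≤ ENNReal.ofReal (2 * C * r) := by
      intro n
      have hfn := hfin x (R * 2 ^ n) (by positivity)
      rw [← ENNReal.ofReal_toReal hfn]
      exact ENNReal.ofReal_le_ofReal (h n)
    have hU : (⋃ n : ℕ, closedBall x (R * 2 ^ n)) = Set.univ := by
      ext y
      simp only [Set.mem_iUnion, Set.mem_univ, iff_true, mem_closedBall]
      obtain ⟨n, hn⟩ := pow_unbounded_of_one_lt (dist y x / R) (by norm_num : (1:ℝ) < 2)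
      exact ⟨n, by rw [div_lt_iff₀ hR] at hn; nlinarith⟩
    have hmono : Monotone fun n : ℕ => closedBall x (R * 2 ^ n) := by
      intro a b hab
      exact closedBall_subset_closedBall (by
        have : (2:ℝ) ^ a ≤ 2 ^ b := pow_le_pow_right₀ (by norm_num) hab
        nlinarith)
    have := MeasureTheory.tendsto_measure_iUnion_atTop (μ := μ) hmono
    rw [hU, hinf] at this
    have hev := this.eventually (eventually_gt_nhds
      (show ENNReal.ofReal (2 * C * r) < ⊤ from ENNReal.ofReal_lt_top))
    obtain ⟨n, hn⟩ := hev.exists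
    exact absurd (hub n) (not_le.mpr hn)
  classical
  set n := Nat.find hex with hn
  have hnspec : 2 * C * r < (μ (closedBall x (R * 2 ^ n))).toReal := Nat.find_spec hex
  have hn0 : n ≠ 0 := by
    intro h0
    rw [h0] at hnspec
    simp only [pow_zero, mul_one] at hnspec
    nlinarith
  have hprev : (μ (closedBall x (R * 2 ^ (n - 1)))).toReal ≤ 2 * C * r := by
    have := Nat.find_min hex (m := n - 1) (by omega)
    push_neg at this
    exact this
  set ρ : ℝ := R * 2 ^ n with hρ
  have hρpos : 0 < ρ := by positivity
  -- the dt-ball of radius r is inside closedBall x (2ρ)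
  have hsub : {y : X | dt x y ≤ r} ⊆ closedBall x (2 * ρ) := by
    intro y hy
    by_contra hout
    simp only [mem_closedBall, not_le] at hout
    rw [dist_comm] at hout
    -- every ball containing x and y has measure > 2r
    have hlow : ∀ m ∈ {m : ℝ | ∃ (z : X) (s : ℝ), x ∈ closedBall z s ∧ y ∈ closedBall z s ∧
        m = (μ (closedBall z s)).toReal}, 2 * r ≤ m := by
      rintro m ⟨z, s, hxz, hyz, rfl⟩
      rw [mem_closedBall] at hxz hyz
      have hs : ρ < s := by
        have := dist_triangle x z y
        rw [dist_comm z y] at this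
        linarith
      have hspos : 0 < s := lt_trans hρpos hs
      have hsub2 : closedBall x ρ ⊆ closedBall z (2 * s) := by
        intro w hw
        rw [mem_closedBall] at hw ⊢
        have := dist_triangle w x z
        linarith
      have h1 : (μ (closedBall x ρ)).toReal ≤ (μ (closedBall z (2 * s))).toReal :=
        ENNReal.toReal_mono (hfin z (2 * s) (by linarith)) (measure_mono hsub2)
      have h2 := hdouble z s hspos
      -- 2Cr < μ(B(x,ρ)) ≤ C·m
      nlinarith [hnspec]
    have hne : {m : ℝ | ∃ (z : X) (s : ℝ), x ∈ closedBall z s ∧ y ∈ closedBall z s ∧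
        m = (μ (closedBall z s)).toReal}.Nonempty := by
      refine ⟨(μ (closedBall x (dist x y))).toReal, x, dist x y,
        mem_closedBall_self dist_nonneg, ?_, rfl⟩
      rw [mem_closedBall, dist_comm]
    have h2r : 2 * r ≤ dt x y := by
      rw [hdt]
      exact le_csInf hne hlow
    have hy' : dt x y ≤ r := hy
    linarith
  refine ⟨r, hr, ?_, ?_⟩
  · -- B(x,R) ⊆ dt-ball of radius r
    intro y hy
    simp only [Set.mem_setOf_eq]
    rw [hdt]
    refine csInf_le ⟨0, ?_⟩ ⟨x, R, mem_closedBall_self hR.le, hy, rfl⟩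
    rintro m ⟨z, s, _, _, rfl⟩
    exact ENNReal.toReal_nonneg
  · have hm1 : (μ {y : X | dt x y ≤ r}).toReal ≤ (μ (closedBall x (2 * ρ))).toReal :=
      ENNReal.toReal_mono (hfin x (2 * ρ) (by linarith)) (measure_mono hsub)
    have hm2 := hdouble x ρ hρpos
    have hρeq : ρ = 2 * (R * 2 ^ (n - 1)) := by
      rw [hρ]
      have : (2:ℝ) ^ n = 2 * 2 ^ (n - 1) := by
        conv_lhs => rw [show n = (n - 1) + 1 by omega]
        ring
      rw [this]; ring
    have hm3 : (μ (closedBall x ρ)).toReal ≤ C * (μ (closedBall x (R * 2 ^ (n - 1)))).toReal := by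
      rw [hρeq]
      exact hdouble x (R * 2 ^ (n - 1)) (by positivity)
    calc (μ {y : X | dt x y ≤ r}).toReal
        ≤ C * (μ (closedBall x ρ)).toReal := le_trans hm1 hm2
      _ ≤ C * (C * (μ (closedBall x (R * 2 ^ (n - 1)))).toReal) :=
          mul_le_mul_of_nonneg_left hm3 hC.le
      _ ≤ C * (C * (2 * C * r)) := by
          refine mul_le_mul_of_nonneg_left (mul_le_mul_of_nonneg_left hprev hC.le) hC.le
      _ = 2 * C ^ 3 * r := by ring
end

section
/- Let T_t be a semigroup of integral operators whose kernel satisfies the two-sided Gaussian bounds. Then there exists a measurable function ω on X with 0 < C^{-1} ≤ ω(x) ≤ C such that T_t ω = ω for every t > 0 (ω is L-harmonic). -/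
/-!
Summing the Gaussian upper bound over the dyadic annuli `2ᵏ⁻¹√t < d(x, y) ≤ 2ᵏ√t` and using
doubling bounds the mass `W_t = T_t 1` by a constant `M`; the lower bound on the ball `B(x, √t)`
gives `W_t ≥ C₀⁻¹ e^{-c₁}`. Since `T_t W_u = W_{t+u}`, the essential limit superior `f` of `W_u` as
`u → ∞` (an essential supremum of uncountably many functions, attained by a countable subfamily)
satisfies `f ≤ T_t f` a.e. Then `t ↦ T_t f` is pointwise nondecreasing and bounded, and its limit
`ω` is invariant: `T_t ω = lim T_{t+n} f = ω`.
-/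

open MeasureTheory Metric Filter Set Topology
open scoped ENNReal

section EssentialSupremum

variable {X ι : Type*} [MeasurableSpace X] {μ : Measure X}

theorem exists_seq_ae_le_iSup [SFinite μ] [Nonempty ι] {F : ι → X → ℝ}
    (hF : ∀ i, Measurable (F i)) {a b : ℝ} (hab : ∀ i x, a ≤ F i x ∧ F i x ≤ b) :
    ∃ D : ℕ → ι, ∀ i, F i ≤ᵐ[μ] fun x => ⨆ n, F (D n) x := by
  set ν := μ.toFinite
  have hbdd : ∀ (D : ℕ → ι) x, BddAbove (range fun n => F (D n) x) :=
    fun D x => ⟨b, forall_mem_range.2 fun n => (hab _ x).2⟩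
  have hsup_mono : ∀ D D' : ℕ → ι, (∀ n, ∃ m, D' m = D n) →
      ∀ x, ⨆ n, F (D n) x ≤ ⨆ n, F (D' n) x := fun D D' h x =>
    ciSup_le fun n => by obtain ⟨m, hm⟩ := h n; exact hm ▸ le_ciSup (hbdd D' x) m
  have hint : ∀ D : ℕ → ι, Integrable (fun x => ⨆ n, F (D n) x) ν := fun D =>
    .of_mem_Icc a b (Measurable.iSup fun n => hF (D n)).aemeasurable <| ae_of_all _ fun x =>
      ⟨(hab (D 0) x).1.trans (le_ciSup (hbdd D x) 0), ciSup_le fun n => (hab _ x).2⟩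
  set J := range fun D : ℕ → ι => ∫ x, ⨆ n, F (D n) x ∂ν
  have hJ : BddAbove J := ⟨b * ν.real univ, forall_mem_range.2 fun D => by
    simpa [mul_comm] using integral_mono (hint D) (integrable_const b)
      fun x => ciSup_le fun n => (hab _ x).2⟩
  obtain ⟨u, -, hu, huJ⟩ := exists_seq_tendsto_sSup (range_nonempty _) hJ
  choose Dk hDk using huJ
  let D : ℕ → ι := fun n => Dk n.unpair.1 n.unpair.2
  have hD : sSup J ≤ ∫ x, ⨆ n, F (D n) x ∂ν := le_of_tendsto' hu fun k => hDk k ▸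
    integral_mono (hint _) (hint _) (hsup_mono _ _ fun n => ⟨Nat.pair k n, by simp [D]⟩)
  refine ⟨D, fun i => ?_⟩
  let D' : ℕ → ι := fun n => Nat.casesOn n i D
  have hDD' := hsup_mono D D' fun n => ⟨n + 1, rfl⟩
  have heq : (fun x => ⨆ n, F (D n) x) =ᵐ[ν] fun x => ⨆ n, F (D' n) x :=
    (integral_eq_iff_of_ae_le (hint D) (hint D') (ae_of_all _ hDD')).1 <| le_antisymm
      (integral_mono (hint D) (hint D') hDD') ((le_csSup hJ ⟨D', rfl⟩).trans hD)
  rw [EventuallyLE, ← ae_toFinite]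
  filter_upwards [heq] with x hx
  exact (le_ciSup (hbdd D' x) 0).trans hx.ge

theorem exists_essSup_family [SFinite μ] [Nonempty ι] {F : ι → X → ℝ}
    (hF : ∀ i, Measurable (F i)) {a b : ℝ} (hab : ∀ i x, a ≤ F i x ∧ F i x ≤ b) :
    ∃ g : X → ℝ, Measurable g ∧ (∀ x, a ≤ g x ∧ g x ≤ b) ∧ (∀ i, F i ≤ᵐ[μ] g) ∧
      ∀ h : X → ℝ, (∀ i, F i ≤ᵐ[μ] h) → g ≤ᵐ[μ] h := by
  obtain ⟨D, hD⟩ := exists_seq_ae_le_iSup (μ := μ) hF hab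
  have hbdd : ∀ x, BddAbove (range fun n => F (D n) x) :=
    fun x => ⟨b, forall_mem_range.2 fun n => (hab _ x).2⟩
  refine ⟨fun x => ⨆ n, F (D n) x, Measurable.iSup fun n => hF (D n),
    fun x => ⟨(hab (D 0) x).1.trans (le_ciSup (hbdd x) 0), ciSup_le fun n => (hab _ x).2⟩,
    hD, fun h hh => ?_⟩
  filter_upwards [ae_all_iff.2 fun n => hh (D n)] with x hx
  exact ciSup_le hx

theorem exists_tail_essSup [SFinite μ] {W : ℝ → X → ℝ} (hWm : ∀ u, 0 < u → Measurable (W u))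
    {a b : ℝ} (hWb : ∀ u, 0 < u → ∀ x, a ≤ W u x ∧ W u x ≤ b) :
    ∃ g : ℕ → X → ℝ, (∀ n, Measurable (g n)) ∧ (∀ n x, a ≤ g n x ∧ g n x ≤ b) ∧
      (∀ (n : ℕ) u, (n : ℝ) < u → W u ≤ᵐ[μ] g n) ∧
      ∀ (n : ℕ) (h : X → ℝ), (∀ u, (n : ℝ) < u → W u ≤ᵐ[μ] h) → g n ≤ᵐ[μ] h := by
  have htail := fun n : ℕ =>
    have : Nonempty (Ioi (n : ℝ)) := ⟨⟨n + 1, by simp⟩⟩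
    exists_essSup_family (μ := μ) (F := fun u : Ioi (n : ℝ) => W u)
      (fun u => hWm u (n.cast_nonneg.trans_lt u.2)) fun u => hWb u (n.cast_nonneg.trans_lt u.2)
  choose g hgm hgb hWg hgmin using htail
  exact ⟨g, hgm, hgb, fun n u hu => hWg n ⟨u, hu⟩, fun n h hh => hgmin n h fun u => hh u u.2⟩

end EssentialSupremum

section Kernel

variable {X : Type*} [MeasurableSpace X] {μ : Measure X}

noncomputable def kernelOp (μ : Measure X) (k : X → X → ℝ) (f : X → ℝ) (x : X) : ℝ :=
  ∫ y, k x y * f y ∂μ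

theorem kernelOp_const (k : X → X → ℝ) (c : ℝ) (x : X) :
    kernelOp μ k (fun _ => c) x = c * ∫ y, k x y ∂μ := by
  rw [kernelOp, integral_mul_const, mul_comm]

structure IsBoundedKernel (μ : Measure X) (k : X → X → ℝ) (M : ℝ) : Prop where
  measurable : Measurable (Function.uncurry k)
  nonneg : ∀ x y, 0 ≤ k x y
  integrable : ∀ x, Integrable (k x) μ
  integral_le : ∀ x, ∫ y, k x y ∂μ ≤ M

namespace IsBoundedKernel

variable {k : X → X → ℝ} {M B : ℝ} {f g : X → ℝ}

theorem integrable_mul (hk : IsBoundedKernel μ k M) (hf : Measurable f)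
    (hfB : ∀ y, |f y| ≤ B) (x : X) : Integrable (fun y => k x y * f y) μ :=
  (hk.integrable x).mul_bdd hf.aestronglyMeasurable (ae_of_all _ hfB)

theorem measurable_kernelOp [SFinite μ] (hk : IsBoundedKernel μ k M) (hf : Measurable f) :
    Measurable (kernelOp μ k f) :=
  (hk.measurable.mul (hf.comp measurable_snd)).stronglyMeasurable.integral_prod_right.measurable

theorem integral_abs_mul_le (hk : IsBoundedKernel μ k M) (hf : Measurable f)
    (hfB : ∀ y, |f y| ≤ B) (x : X) : ∫ y, |k x y * f y| ∂μ ≤ M * B := by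
  have hB : 0 ≤ B := (abs_nonneg _).trans (hfB x)
  calc ∫ y, |k x y * f y| ∂μ ≤ ∫ y, k x y * B ∂μ :=
        integral_mono (hk.integrable_mul hf hfB x).abs ((hk.integrable x).mul_const B) fun y => by
          rw [abs_mul, abs_of_nonneg (hk.nonneg x y)]
          exact mul_le_mul_of_nonneg_left (hfB y) (hk.nonneg x y)
    _ ≤ M * B := by rw [integral_mul_const]; exact mul_le_mul_of_nonneg_right (hk.integral_le x) hB

theorem abs_kernelOp_le (hk : IsBoundedKernel μ k M) (hf : Measurable f)
    (hfB : ∀ y, |f y| ≤ B) (x : X) : |kernelOp μ k f x| ≤ M * B :=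
  (abs_integral_le_integral_abs).trans (hk.integral_abs_mul_le hf hfB x)

theorem kernelOp_mono (hk : IsBoundedKernel μ k M) (hf : Measurable f) (hg : Measurable g)
    {B' : ℝ} (hfB : ∀ y, |f y| ≤ B) (hgB : ∀ y, |g y| ≤ B') (hfg : f ≤ᵐ[μ] g) (x : X) :
    kernelOp μ k f x ≤ kernelOp μ k g x :=
  integral_mono_ae (hk.integrable_mul hf hfB x) (hk.integrable_mul hg hgB x) <|
    hfg.mono fun y hy => mul_le_mul_of_nonneg_left hy (hk.nonneg x y)

theorem tendsto_kernelOp (hk : IsBoundedKernel μ k M) {F : ℕ → X → ℝ}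
    (hF : ∀ n, Measurable (F n)) (hFB : ∀ n y, |F n y| ≤ B)
    (hlim : ∀ᵐ y ∂μ, Tendsto (fun n => F n y) atTop (𝓝 (f y))) (x : X) :
    Tendsto (fun n => kernelOp μ k (F n) x) atTop (𝓝 (kernelOp μ k f x)) := by
  refine tendsto_integral_of_dominated_convergence (fun y => k x y * B)
    (fun n => (hk.integrable_mul (hF n) (hFB n) x).aestronglyMeasurable)
    ((hk.integrable x).mul_const B) (fun n => ae_of_all _ fun y => ?_)
    (hlim.mono fun y hy => hy.const_mul (k x y))
  rw [Real.norm_eq_abs, abs_mul, abs_of_nonneg (hk.nonneg x y)]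
  exact mul_le_mul_of_nonneg_left (hFB n y) (hk.nonneg x y)

theorem kernelOp_kernelOp [SFinite μ] {k₁ k₂ : X → X → ℝ} {M₁ M₂ : ℝ}
    (hk₁ : IsBoundedKernel μ k₁ M₁) (hk₂ : IsBoundedKernel μ k₂ M₂) (hf : Measurable f)
    (hfB : ∀ y, |f y| ≤ B) (x : X) :
    kernelOp μ k₁ (kernelOp μ k₂ f) x = ∫ z, (∫ y, k₁ x y * k₂ y z ∂μ) * f z ∂μ := by
  set G : X × X → ℝ := fun p => k₁ x p.1 * (k₂ p.1 p.2 * f p.2)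
  have hGm : Measurable G := ((hk₁.measurable.comp measurable_prodMk_left).comp measurable_fst).mul
    (hk₂.measurable.mul (hf.comp measurable_snd))
  have hG : Integrable G (μ.prod μ) := by
    refine (integrable_prod_iff hGm.aestronglyMeasurable).2
      ⟨ae_of_all _ fun y => (hk₂.integrable_mul hf hfB y).const_mul (k₁ x y), ?_⟩
    refine ((hk₁.integrable x).mul_const (M₂ * B)).mono'
      hGm.norm.stronglyMeasurable.integral_prod_right'.aestronglyMeasurable
      (ae_of_all _ fun y => ?_)
    simp only [G, norm_mul, Real.norm_eq_abs, abs_of_nonneg (hk₁.nonneg x y)]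
    rw [integral_const_mul, abs_of_nonneg (mul_nonneg (hk₁.nonneg x y) (integral_nonneg
      fun z => mul_nonneg (abs_nonneg _) (abs_nonneg _)))]
    simp only [← abs_mul]
    exact mul_le_mul_of_nonneg_left (hk₂.integral_abs_mul_le hf hfB y) (hk₁.nonneg x y)
  calc kernelOp μ k₁ (kernelOp μ k₂ f) x = ∫ y, ∫ z, k₁ x y * (k₂ y z * f z) ∂μ ∂μ := by
        simp only [kernelOp, integral_const_mul]
    _ = ∫ z, ∫ y, k₁ x y * (k₂ y z * f z) ∂μ ∂μ := integral_integral_swap hG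
    _ = ∫ z, (∫ y, k₁ x y * k₂ y z ∂μ) * f z ∂μ := by
        simp only [← integral_mul_const, mul_assoc]

end IsBoundedKernel

end Kernel

section Semigroup

variable {X : Type*} [MeasurableSpace X] {μ : Measure X}

structure IsBoundedKernelSemigroup (μ : Measure X) (T : ℝ → X → X → ℝ) (M : ℝ) : Prop where
  isBoundedKernel : ∀ t, 0 < t → IsBoundedKernel μ (T t) M
  add_eq_integral : ∀ s t, 0 < s → 0 < t → ∀ x y, T (s + t) x y = ∫ z, T s x z * T t z y ∂μ

namespace IsBoundedKernelSemigroup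

variable [SFinite μ] {T : ℝ → X → X → ℝ} {M B : ℝ} {f : X → ℝ}

theorem kernelOp_add (hT : IsBoundedKernelSemigroup μ T M) {s t : ℝ} (hs : 0 < s) (ht : 0 < t)
    (hf : Measurable f) (hfB : ∀ y, |f y| ≤ B) (x : X) :
    kernelOp μ (T (s + t)) f x = kernelOp μ (T s) (kernelOp μ (T t) f) x := by
  rw [(hT.isBoundedKernel s hs).kernelOp_kernelOp (hT.isBoundedKernel t ht) hf hfB]
  simp only [kernelOp, hT.add_eq_integral s t hs ht]

theorem kernelOp_le_kernelOp_of_le (hT : IsBoundedKernelSemigroup μ T M) (hf : Measurable f)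
    (hfB : ∀ y, |f y| ≤ B) (hsub : ∀ t, 0 < t → f ≤ᵐ[μ] kernelOp μ (T t) f) {s t : ℝ}
    (hs : 0 < s) (hst : s ≤ t) (x : X) :
    kernelOp μ (T s) f x ≤ kernelOp μ (T t) f x := by
  rcases hst.eq_or_lt with rfl | hlt
  · rfl
  have hk := hT.isBoundedKernel
  have hts : 0 < t - s := sub_pos.2 hlt
  calc kernelOp μ (T s) f x ≤ kernelOp μ (T s) (kernelOp μ (T (t - s)) f) x :=
        (hk s hs).kernelOp_mono hf ((hk _ hts).measurable_kernelOp hf) hfB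
          ((hk _ hts).abs_kernelOp_le hf hfB) (hsub _ hts) x
    _ = kernelOp μ (T t) f x := by rw [← hT.kernelOp_add hs hts hf hfB, add_sub_cancel]

theorem exists_subinvariant (hT : IsBoundedKernelSemigroup μ T M) {m : ℝ}
    (hm : ∀ t, 0 < t → ∀ x, m ≤ ∫ y, T t x y ∂μ) :
    ∃ f : X → ℝ, Measurable f ∧ (∀ x, m ≤ f x ∧ f x ≤ M) ∧
      ∀ t, 0 < t → f ≤ᵐ[μ] kernelOp μ (T t) f := by
  have hk := hT.isBoundedKernel
  set W : ℝ → X → ℝ := fun u => kernelOp μ (T u) fun _ => 1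
  have hWm : ∀ u, 0 < u → Measurable (W u) := fun u hu =>
    (hk u hu).measurable_kernelOp measurable_const
  have hWb : ∀ u, 0 < u → ∀ x, m ≤ W u x ∧ W u x ≤ M := fun u hu x => by
    simpa [W, kernelOp_const] using ⟨hm u hu x, (hk u hu).integral_le x⟩
  have hWB : ∀ u, 0 < u → ∀ y, |W u y| ≤ max |m| |M| :=
    fun u hu y => abs_le_max_abs_abs (hWb u hu y).1 (hWb u hu y).2
  have hone : ∀ y, |(fun _ : X => (1 : ℝ)) y| ≤ 1 := fun _ => by simp
  obtain ⟨g, hgm, hgb, hWg, hgmin⟩ := exists_tail_essSup (μ := μ) hWm hWb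
  have hgB : ∀ n y, |g n y| ≤ max |m| |M| :=
    fun n y => abs_le_max_abs_abs (hgb n y).1 (hgb n y).2
  have hanti : ∀ n, g (n + 1) ≤ᵐ[μ] g n := fun n =>
    hgmin _ _ fun u hu => hWg n u (by push_cast at hu; linarith)
  have hstep : ∀ t, 0 < t → ∀ n, g (n + ⌈t⌉₊) ≤ᵐ[μ] kernelOp μ (T t) (g n) :=
    fun t ht n => hgmin _ _ fun u hu => ae_of_all _ fun x => by
      have hut : (n : ℝ) < u - t := by push_cast at hu; linarith [Nat.le_ceil t]
      have hut₀ : 0 < u - t := n.cast_nonneg.trans_lt hut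
      calc W u x = W (t + (u - t)) x := by rw [add_sub_cancel]
        _ = kernelOp μ (T t) (W (u - t)) x := hT.kernelOp_add ht hut₀ measurable_const hone x
        _ ≤ kernelOp μ (T t) (g n) x := (hk t ht).kernelOp_mono (hWm _ hut₀) (hgm n)
            (hWB _ hut₀) (hgB n) (hWg n _ hut) x
  have hbdd : ∀ x, BddBelow (range fun n => g n x) :=
    fun x => ⟨m, forall_mem_range.2 fun n => (hgb n x).1⟩
  have hlim : ∀ᵐ x ∂μ, Tendsto (fun n => g n x) atTop (𝓝 (⨅ n, g n x)) := by
    filter_upwards [ae_all_iff.2 hanti] with x hx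
    exact tendsto_atTop_ciInf (antitone_nat_of_succ_le hx) (hbdd x)
  refine ⟨fun x => ⨅ n, g n x, Measurable.iInf hgm,
    fun x => ⟨le_ciInf fun n => (hgb n x).1, (ciInf_le (hbdd x) 0).trans (hgb 0 x).2⟩,
    fun t ht => ?_⟩
  filter_upwards [ae_all_iff.2 (hstep t ht)] with x hx
  exact ge_of_tendsto ((hk t ht).tendsto_kernelOp hgm hgB hlim x)
    (Eventually.of_forall fun n => (ciInf_le (hbdd x) _).trans (hx n))

theorem exists_invariant_of_subinvariant (hT : IsBoundedKernelSemigroup μ T M) {m a b : ℝ}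
    (hm : ∀ t, 0 < t → ∀ x, m ≤ ∫ y, T t x y ∂μ) (ha : 0 ≤ a) (hf : Measurable f)
    (hfab : ∀ x, a ≤ f x ∧ f x ≤ b) (hsub : ∀ t, 0 < t → f ≤ᵐ[μ] kernelOp μ (T t) f) :
    ∃ ω : X → ℝ, Measurable ω ∧ (∀ x, a * m ≤ ω x ∧ ω x ≤ M * b) ∧
      ∀ t, 0 < t → ∀ x, kernelOp μ (T t) ω x = ω x := by
  have hk := hT.isBoundedKernel
  have hfB : ∀ y, |f y| ≤ b := fun y => abs_le.2 ⟨by linarith [hfab y], (hfab y).2⟩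
  have hpos : ∀ n : ℕ, (0 : ℝ) < n + 1 := fun n => by positivity
  set F : ℕ → X → ℝ := fun n => kernelOp μ (T (n + 1)) f
  have hFm : ∀ n, Measurable (F n) := fun n => (hk _ (hpos n)).measurable_kernelOp hf
  have hFB : ∀ n y, |F n y| ≤ M * b := fun n => (hk _ (hpos n)).abs_kernelOp_le hf hfB
  have hFmono : ∀ x, Monotone fun n => F n x := fun x => monotone_nat_of_le_succ fun n =>
    hT.kernelOp_le_kernelOp_of_le hf hfB hsub (hpos n) (by push_cast; linarith) x
  have hFlow : ∀ x, a * m ≤ F 0 x := fun x => calc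
    a * m ≤ a * ∫ y, T 1 x y ∂μ := mul_le_mul_of_nonneg_left (hm 1 one_pos x) ha
    _ = kernelOp μ (T 1) (fun _ => a) x := (kernelOp_const _ a x).symm
    _ ≤ F 0 x := by
      simpa [F] using (hk 1 one_pos).kernelOp_mono measurable_const hf (fun _ => le_rfl) hfB
        (ae_of_all _ fun y => (hfab y).1) x
  have hbdd : ∀ x, BddAbove (range fun n => F n x) :=
    fun x => ⟨M * b, forall_mem_range.2 fun n => (le_abs_self _).trans (hFB n x)⟩
  have hlim : ∀ x, Tendsto (fun n => F n x) atTop (𝓝 (⨆ n, F n x)) :=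
    fun x => tendsto_atTop_ciSup (hFmono x) (hbdd x)
  refine ⟨fun x => ⨆ n, F n x, Measurable.iSup hFm, fun x => ⟨(hFlow x).trans
    (le_ciSup (hbdd x) 0), ciSup_le fun n => (le_abs_self _).trans (hFB n x)⟩, fun t ht x => ?_⟩
  refine tendsto_nhds_unique ((hk t ht).tendsto_kernelOp hFm hFB (ae_of_all _ hlim) x) ?_
  -- `T_t (F n) = T_{t + n + 1} f` lies between `F n` and `F (n + ⌈t⌉₊)`
  simp only [F, ← hT.kernelOp_add ht (hpos _) hf hfB]
  refine tendsto_of_tendsto_of_tendsto_of_le_of_le (hlim x)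
    ((hlim x).comp (tendsto_add_atTop_nat ⌈t⌉₊)) (fun n => ?_) (fun n => ?_)
  · exact hT.kernelOp_le_kernelOp_of_le hf hfB hsub (hpos n) (by linarith) x
  · refine hT.kernelOp_le_kernelOp_of_le hf hfB hsub (by positivity) ?_ x
    push_cast; linarith [Nat.le_ceil t]

end IsBoundedKernelSemigroup

end Semigroup

section GaussianBounds

variable {X : Type*} [PseudoMetricSpace X]

/-- Bounds the mass of a Gaussian of width `√t`, in units of `μ(B(x, √t))`, for a measure with
doubling constant `D`: the `k`-th term accounts for the ball `B(x, 2ᵏ√t)`. -/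
noncomputable def gaussianMassBound (D c : ℝ) : ℝ :=
  ∑' k : ℕ, D ^ k * Real.exp (-c * (4 ^ k - 1) / 4)

theorem summable_gaussianMass {D c : ℝ} (hD : 0 < D) (hc : 0 < c) :
    Summable fun k : ℕ => D ^ k * Real.exp (-c * (4 ^ k - 1) / 4) := by
  refine summable_of_ratio_test_tendsto_lt_one zero_lt_one
    (Eventually.of_forall fun k => by positivity) ?_
  have hratio : ∀ k : ℕ, ‖D ^ (k + 1) * Real.exp (-c * (4 ^ (k + 1) - 1) / 4)‖ /
      ‖D ^ k * Real.exp (-c * (4 ^ k - 1) / 4)‖ = D * Real.exp (-(3 * c / 4) * 4 ^ k) := by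
    intro k
    rw [Real.norm_of_nonneg (by positivity), Real.norm_of_nonneg (by positivity),
      div_eq_iff (by positivity)]
    have hexp : Real.exp (-c * (4 ^ (k + 1) - 1) / 4) =
        Real.exp (-(3 * c / 4) * 4 ^ k) * Real.exp (-c * (4 ^ k - 1) / 4) := by
      rw [← Real.exp_add]; ring_nf
    rw [hexp]; ring
  simp_rw [hratio]
  have h4 : Tendsto (fun k : ℕ => -(3 * c / 4) * (4 : ℝ) ^ k) atTop atBot :=
    (tendsto_pow_atTop_atTop_of_one_lt (by norm_num)).const_mul_atTop_of_neg (by linarith)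
  simpa using (Real.tendsto_exp_atBot.comp h4).const_mul D

/-- On the annulus `2ᵏ⁻¹√t < d(x, y) ≤ 2ᵏ√t` the Gaussian is at most
`e^{-c 4ᵏ⁻¹} ≤ e^{-c(4ᵏ-1)/4}`. -/
theorem ofReal_exp_le_tsum_indicator {x y : X} {t c : ℝ} (ht : 0 < t) (hc : 0 ≤ c) :
    ENNReal.ofReal (Real.exp (-c * dist x y ^ 2 / t)) ≤ ∑' k : ℕ,
      (closedBall x (2 ^ k * √t)).indicator
        (fun _ => ENNReal.ofReal (Real.exp (-c * (4 ^ k - 1) / 4))) y := by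
  have hex : ∃ k : ℕ, dist y x ≤ 2 ^ k * √t := by
    obtain ⟨k, hk⟩ := pow_unbounded_of_one_lt (dist y x / √t) (by norm_num : (1 : ℝ) < 2)
    exact ⟨k, ((div_lt_iff₀ (Real.sqrt_pos.2 ht)).1 hk).le⟩
  refine le_trans ?_ (ENNReal.le_tsum (Nat.find hex))
  rw [indicator_of_mem (mem_closedBall.2 (Nat.find_spec hex))]
  refine ENNReal.ofReal_le_ofReal (Real.exp_le_exp.2 ?_)
  suffices (4 ^ Nat.find hex - 1) / 4 ≤ dist x y ^ 2 / t by
    rw [neg_mul, neg_mul, neg_div, neg_div, neg_le_neg_iff, mul_div_assoc, mul_div_assoc]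
    exact mul_le_mul_of_nonneg_left this hc
  cases hk : Nat.find hex with
  | zero => simp only [pow_zero, sub_self, zero_div]; positivity
  | succ j =>
    have hj : 2 ^ j * √t < dist x y :=
      dist_comm x y ▸ lt_of_not_ge (Nat.find_min hex (by omega : j < Nat.find hex))
    have hsq : (2 ^ j * √t) ^ 2 = 4 ^ j * t := by
      rw [mul_pow, Real.sq_sqrt ht.le, ← pow_mul, mul_comm j 2, pow_mul]; norm_num
    have h4 : ((4 : ℝ) ^ (j + 1) - 1) / 4 * t ≤ 4 ^ j * t := by rw [pow_succ]; nlinarith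
    rw [le_div_iff₀ ht]
    linarith [pow_lt_pow_left₀ hj (by positivity) two_ne_zero]

variable [MeasurableSpace X] {μ : Measure X}

theorem sigmaFinite_of_measure_closedBall_ne_top
    (h : ∀ (x : X) (r : ℝ), 0 < r → μ (closedBall x r) ≠ ∞) : SigmaFinite μ := by
  rcases isEmpty_or_nonempty X with hX | ⟨⟨x₀⟩⟩
  · exact Measure.sigmaFinite_of_countable countable_empty (by simp) (by simp [eq_empty_of_isEmpty])
  · exact ⟨⟨⟨fun n : ℕ => closedBall x₀ (n + 1), fun _ => mem_univ _,
      fun n => (h x₀ _ (by positivity)).lt_top, iUnion_eq_univ_iff.2 fun y =>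
        ⟨⌈dist y x₀⌉₊, mem_closedBall.2 ((Nat.le_ceil _).trans (by linarith))⟩⟩⟩⟩

theorem measure_closedBall_two_pow_le {x : X} {D : ℝ} (hD : 0 ≤ D)
    (hdouble : ∀ r, 0 < r →
      (μ (closedBall x (2 * r))).toReal ≤ D * (μ (closedBall x r)).toReal)
    {r : ℝ} (hr : 0 < r) (k : ℕ) :
    (μ (closedBall x (2 ^ k * r))).toReal ≤ D ^ k * (μ (closedBall x r)).toReal := by
  induction k with
  | zero => simp
  | succ k ih =>
    calc (μ (closedBall x (2 ^ (k + 1) * r))).toReal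
        = (μ (closedBall x (2 * (2 ^ k * r)))).toReal := by rw [pow_succ', mul_assoc]
      _ ≤ D * (μ (closedBall x (2 ^ k * r))).toReal := hdouble _ (by positivity)
      _ ≤ D ^ (k + 1) * (μ (closedBall x r)).toReal := by
        rw [pow_succ', mul_assoc]; exact mul_le_mul_of_nonneg_left ih hD

variable [OpensMeasurableSpace X]

theorem lintegral_le_of_le_gaussian {x : X} {t : ℝ} (ht : 0 < t)
    (hvol : ∀ r, 0 < r → 0 < (μ (closedBall x r)).toReal) {D : ℝ} (hD : 0 < D)
    (hdouble : ∀ r, 0 < r →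
      (μ (closedBall x (2 * r))).toReal ≤ D * (μ (closedBall x r)).toReal)
    {C c : ℝ} (hC : 0 ≤ C) (hc : 0 < c) {K : X → ℝ}
    (hK : ∀ y, K y ≤ C / (μ (closedBall x √t)).toReal * Real.exp (-c * dist x y ^ 2 / t)) :
    ∫⁻ y, ENNReal.ofReal (K y) ∂μ ≤ ENNReal.ofReal (C * gaussianMassBound D c) := by
  set V := (μ (closedBall x √t)).toReal
  have hV : 0 < V := hvol _ (Real.sqrt_pos.2 ht)
  set a : ℕ → ℝ := fun k => Real.exp (-c * (4 ^ k - 1) / 4)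
  have hball : ∀ k : ℕ, μ (closedBall x (2 ^ k * √t)) ≤ ENNReal.ofReal (D ^ k * V) := fun k =>
    (ENNReal.le_ofReal_iff_toReal_le (ENNReal.toReal_pos_iff.1 (hvol _ (by positivity))).2.ne
      (by positivity)).2 (measure_closedBall_two_pow_le hD.le hdouble (Real.sqrt_pos.2 ht) k)
  calc ∫⁻ y, ENNReal.ofReal (K y) ∂μ
      ≤ ∫⁻ y, ENNReal.ofReal (C / V) *
          ∑' k, (closedBall x (2 ^ k * √t)).indicator (fun _ => ENNReal.ofReal (a k)) y ∂μ :=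
        lintegral_mono fun y => (ENNReal.ofReal_le_ofReal (hK y)).trans <| by
          rw [ENNReal.ofReal_mul (by positivity)]
          gcongr
          exact ofReal_exp_le_tsum_indicator ht hc.le
    _ = ENNReal.ofReal (C / V) * ∑' k, ENNReal.ofReal (a k) * μ (closedBall x (2 ^ k * √t)) := by
        rw [lintegral_const_mul' _ _ ENNReal.ofReal_ne_top, lintegral_tsum fun k =>
          (measurable_const.indicator measurableSet_closedBall).aemeasurable]
        simp only [lintegral_indicator_const measurableSet_closedBall]
    _ ≤ ENNReal.ofReal (C / V) * ∑' k, ENNReal.ofReal (a k) * ENNReal.ofReal (D ^ k * V) := by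
        gcongr with k; exact hball k
    _ = ENNReal.ofReal (C * gaussianMassBound D c) := by
        rw [← ENNReal.tsum_mul_left, gaussianMassBound, ← tsum_mul_left,
          ENNReal.ofReal_tsum_of_nonneg (fun k => by positivity)
            ((summable_gaussianMass hD hc).mul_left C)]
        congr 1 with k
        rw [← ENNReal.ofReal_mul (by positivity), ← ENNReal.ofReal_mul (by positivity)]
        congr 1
        simp only [a]
        field_simp

theorem le_integral_of_gaussian_le {x : X} {t : ℝ} (ht : 0 < t)
    (hvol : 0 < (μ (closedBall x √t)).toReal) {C c : ℝ} (hC : 0 ≤ C) (hc : 0 ≤ c)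
    {K : X → ℝ} (hK0 : ∀ y, 0 ≤ K y) (hKi : Integrable K μ)
    (hK : ∀ y, C / (μ (closedBall x √t)).toReal * Real.exp (-c * dist x y ^ 2 / t) ≤ K y) :
    C * Real.exp (-c) ≤ ∫ y, K y ∂μ := by
  have hV := hvol.ne'
  calc C * Real.exp (-c)
      = ∫ _ in closedBall x √t, C / (μ (closedBall x √t)).toReal * Real.exp (-c) ∂μ := by
        rw [setIntegral_const, smul_eq_mul, measureReal_def]; field_simp
    _ ≤ ∫ y in closedBall x √t, K y ∂μ := by
        refine setIntegral_mono_on (integrableOn_const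
          (ENNReal.toReal_pos_iff.1 hvol).2.ne) hKi.integrableOn measurableSet_closedBall
          fun y hy => (mul_le_mul_of_nonneg_left (Real.exp_le_exp.2 ?_) (by positivity)).trans
            (hK y)
        have hd : dist x y ^ 2 ≤ t := by
          rw [← Real.sq_sqrt ht.le, dist_comm]
          exact pow_le_pow_left₀ dist_nonneg (mem_closedBall.1 hy) 2
        rw [neg_mul, neg_div, neg_le_neg_iff, div_le_iff₀ ht]
        exact mul_le_mul_of_nonneg_left hd hc
    _ ≤ ∫ y, K y ∂μ := setIntegral_le_integral hKi (ae_of_all _ hK0)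

theorem isBoundedKernel_of_le_gaussian {k : X → X → ℝ} (hk : Measurable (Function.uncurry k))
    (hk0 : ∀ x y, 0 ≤ k x y) {t : ℝ} (ht : 0 < t)
    (hvol : ∀ (x : X) r, 0 < r → 0 < (μ (closedBall x r)).toReal) {D : ℝ} (hD : 0 < D)
    (hdouble : ∀ (x : X) r, 0 < r →
      (μ (closedBall x (2 * r))).toReal ≤ D * (μ (closedBall x r)).toReal)
    {C c : ℝ} (hC : 0 ≤ C) (hc : 0 < c)
    (hup : ∀ x y, k x y ≤ C / (μ (closedBall x √t)).toReal * Real.exp (-c * dist x y ^ 2 / t)) :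
    IsBoundedKernel μ k (C * gaussianMassBound D c) := by
  have hmass := fun x => lintegral_le_of_le_gaussian ht (hvol x) hD (hdouble x) hC hc (hup x)
  have hkm : ∀ x, Measurable (k x) := fun x => hk.comp measurable_prodMk_left
  have hki : ∀ x, Integrable (k x) μ := fun x => ⟨(hkm x).aestronglyMeasurable,
    (hasFiniteIntegral_iff_ofReal (ae_of_all _ (hk0 x))).2
      ((hmass x).trans_lt ENNReal.ofReal_lt_top)⟩
  refine ⟨hk, hk0, hki, fun x => ?_⟩
  rw [integral_eq_lintegral_of_nonneg_ae (ae_of_all _ (hk0 x)) (hkm x).aestronglyMeasurable]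
  exact ENNReal.toReal_le_of_le_ofReal
    (mul_nonneg hC (tsum_nonneg fun k => by positivity)) (hmass x)

end GaussianBounds

/-- If the kernel `T_t(x,y)` of a semigroup satisfies two-sided Gaussian bounds on a
space of homogeneous type, then there exists a bounded, bounded-below measurable
function `ω` which is `L`-harmonic: `T_t ω = ω` for every `t > 0`. -/
theorem exists_bounded_harmonic_function
    {X : Type*} [MetricSpace X] [MeasurableSpace X] [BorelSpace X]
    (μ : Measure X)
    (hvol : ∀ (x : X) (r : ℝ), 0 < r → 0 < (μ (closedBall x r)).toReal)
    (Cdbl : ℝ) (hCdbl : 0 < Cdbl)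
    (hdouble : ∀ (x : X) (r : ℝ), 0 < r →
      (μ (closedBall x (2 * r))).toReal ≤ Cdbl * (μ (closedBall x r)).toReal)
    (T : ℝ → X → X → ℝ)
    (hTmeas : ∀ t : ℝ, Measurable (Function.uncurry (T t)))
    (hTsemigroup : ∀ s t : ℝ, 0 < s → 0 < t → ∀ x y : X,
      T (s + t) x y = ∫ z, T s x z * T t z y ∂μ)
    (C₀ c₁ c₂ : ℝ) (hC₀ : 0 < C₀) (hc₂ : 0 < c₂) (hc₁₂ : c₂ ≤ c₁)
    (hgauss : ∀ (t : ℝ), 0 < t → ∀ x y : X,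
      C₀⁻¹ / (μ (closedBall x (Real.sqrt t))).toReal *
          Real.exp (-c₁ * dist x y ^ 2 / t) ≤ T t x y ∧
      T t x y ≤ C₀ / (μ (closedBall x (Real.sqrt t))).toReal *
          Real.exp (-c₂ * dist x y ^ 2 / t)) :
    ∃ C > (0 : ℝ), ∃ ω : X → ℝ, Measurable ω ∧
      (∀ x : X, C⁻¹ ≤ ω x ∧ ω x ≤ C) ∧
      (∀ t : ℝ, 0 < t → ∀ᵐ x ∂μ, ∫ y, T t x y * ω y ∂μ = ω x) := by
  have : SigmaFinite μ := sigmaFinite_of_measure_closedBall_ne_top fun x r hr =>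
    (ENNReal.toReal_pos_iff.1 (hvol x r hr)).2.ne
  have hT0 : ∀ t, 0 < t → ∀ x y, 0 ≤ T t x y := fun t ht x y =>
    (mul_nonneg (div_nonneg (inv_nonneg.2 hC₀.le) ENNReal.toReal_nonneg)
      (Real.exp_pos _).le).trans (hgauss t ht x y).1
  set M := C₀ * gaussianMassBound Cdbl c₂
  set m := C₀⁻¹ * Real.exp (-c₁)
  have hT : IsBoundedKernelSemigroup μ T M := ⟨fun t ht => isBoundedKernel_of_le_gaussian
    (hTmeas t) (hT0 t ht) ht hvol hCdbl hdouble hC₀.le hc₂ fun x y => (hgauss t ht x y).2,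
    hTsemigroup⟩
  have hm : ∀ t, 0 < t → ∀ x, m ≤ ∫ y, T t x y ∂μ := fun t ht x =>
    le_integral_of_gaussian_le ht (hvol x _ (Real.sqrt_pos.2 ht)) (inv_nonneg.2 hC₀.le)
      (hc₂.le.trans hc₁₂) (hT0 t ht x) ((hT.isBoundedKernel t ht).integrable x)
      fun y => (hgauss t ht x y).1
  have hm0 : 0 < m := by positivity
  obtain ⟨f, hfm, hfb, hfsub⟩ := hT.exists_subinvariant hm
  obtain ⟨ω, hωm, hωb, hω⟩ := hT.exists_invariant_of_subinvariant hm hm0.le hfm hfb hfsub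
  refine ⟨max (m * m)⁻¹ (M * M), lt_max_of_lt_left (by positivity), ω, hωm, fun x =>
    ⟨(inv_le_of_inv_le₀ (by positivity) (le_max_left _ _)).trans (hωb x).1,
      (hωb x).2.trans (le_max_right _ _)⟩, fun t ht => ae_of_all _ (hω t ht)⟩
end

section
/- There exists γ ∈ (0,1) such that: if y,z ∈ X, t₀ > 0 with d(y,z) < t₀, and a₁ ≤ P_{t₀}(x,y)/P_{t₀}(x,z) ≤ b₁ for all x ∈ X, then there exists a subinterval [a₂,b₂] ⊆ [a₁,b₁] with b₂ − a₂ = γ(b₁ − a₁) such that a₂ ≤ P_t(x,y)/P_t(x,z) ≤ b₂ for all t ≥ 2t₀ and all x ∈ X. -/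
open MeasureTheory Metric

/-!
For `a ≤ b`, the functions `F = P_t(·,y) - a P_t(·,z)` and `H = b P_t(·,z) - P_t(·,y)` are
nonnegative at time `t₀`. Through the semigroup law, their values at time `τ = 3t₀/2` are averages
of their values at `t₀` against `P_{t₀/2}`, so they stay nonnegative and satisfy a Harnack
inequality at scale `t₀/2`. With `g = P_τ(z,y)/P_τ(z,z) ∈ [a, b]`, this gives
`F ≳ (g - a) P_τ(·,z)` and `H ≳ (b - g) P_τ(·,z)` on the ball `B(z, t₀/2)`. For `t ≥ 2t₀` write
`P_t = P_{t-τ} P_τ`: by the two-sided kernel bounds and volume doubling, the ball carries a fixed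
fraction `δ` of `P_t(x,z) = ∫ P_{t-τ}(x,w) P_τ(w,z) dw`, so `F(t,x) ≥ δ (g - a) P_t(x,z)` and
`H(t,x) ≥ δ (b - g) P_t(x,z)`. Hence the ratio at time `t` lies in
`[a + δ(g - a), b - δ(b - g)]`, which has length `(1 - δ)(b - a)`.
-/

section LinComb

variable {X : Type*}

def linComb (P : ℝ → X → X → ℝ) (y z : X) (α β t : ℝ) (w : X) : ℝ :=
  α * P t w y + β * P t w z

variable {P : ℝ → X → X → ℝ} {y z : X}

theorem le_div_iff_linComb_nonneg {a t : ℝ} {w : X} (hz : 0 < P t w z) :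
    a ≤ P t w y / P t w z ↔ 0 ≤ linComb P y z 1 (-a) t w := by
  rw [le_div_iff₀ hz, linComb]
  constructor <;> intro h <;> linarith

theorem div_le_iff_linComb_nonneg {b t : ℝ} {w : X} (hz : 0 < P t w z) :
    P t w y / P t w z ≤ b ↔ 0 ≤ linComb P y z (-1) b t w := by
  rw [div_le_iff₀ hz, linComb]
  constructor <;> intro h <;> linarith

theorem linComb_one_neg_div {a t : ℝ} {w : X} (hz : P t w z ≠ 0) :
    linComb P y z 1 (-a) t w / P t w z = P t w y / P t w z - a := by
  rw [linComb]; field_simp; ring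

theorem linComb_neg_one_div {b t : ℝ} {w : X} (hz : P t w z ≠ 0) :
    linComb P y z (-1) b t w / P t w z = b - P t w y / P t w z := by
  rw [linComb]; field_simp; ring

end LinComb

section Semigroup

variable {X : Type*} [MeasurableSpace X]

def IsKernelSemigroup (μ : Measure X) (P : ℝ → X → X → ℝ) : Prop :=
  ∀ s t : ℝ, 0 < s → 0 < t → ∀ x y : X, P (s + t) x y = ∫ w, P s x w * P t w y ∂μ

variable {μ : Measure X} {P : ℝ → X → X → ℝ} {y z : X} {α β : ℝ}

/-- The Bochner integral of a non-integrable function is `0`, so a nonzero kernel value forces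
the integrand of the semigroup identity to be integrable. -/
theorem IsKernelSemigroup.integrable_mul (hP : IsKernelSemigroup μ P)
    (hpos : ∀ t : ℝ, 0 < t → ∀ x y : X, 0 < P t x y)
    {s t : ℝ} (hs : 0 < s) (ht : 0 < t) (x y : X) :
    Integrable (fun w => P s x w * P t w y) μ := by
  by_contra h
  have := hpos (s + t) (by positivity) x y
  rw [hP s t hs ht x y, integral_undef h] at this
  exact lt_irrefl 0 this

theorem IsKernelSemigroup.integrable_mul_linComb (hP : IsKernelSemigroup μ P)
    (hpos : ∀ t : ℝ, 0 < t → ∀ x y : X, 0 < P t x y)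
    {s t : ℝ} (hs : 0 < s) (ht : 0 < t) (x : X) :
    Integrable (fun w => P s x w * linComb P y z α β t w) μ := by
  simp only [linComb, mul_add, mul_left_comm (P s x _)]
  exact ((hP.integrable_mul hpos hs ht x y).const_mul α).add
    ((hP.integrable_mul hpos hs ht x z).const_mul β)

theorem IsKernelSemigroup.linComb_add (hP : IsKernelSemigroup μ P)
    (hpos : ∀ t : ℝ, 0 < t → ∀ x y : X, 0 < P t x y)
    {s t : ℝ} (hs : 0 < s) (ht : 0 < t) (x : X) :
    linComb P y z α β (s + t) x = ∫ w, P s x w * linComb P y z α β t w ∂μ := by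
  simp only [linComb, mul_add, mul_left_comm (P s x _)]
  rw [integral_add ((hP.integrable_mul hpos hs ht x y).const_mul α)
      ((hP.integrable_mul hpos hs ht x z).const_mul β),
    integral_const_mul, integral_const_mul, hP s t hs ht x y, hP s t hs ht x z]

theorem IsKernelSemigroup.linComb_add_nonneg (hP : IsKernelSemigroup μ P)
    (hpos : ∀ t : ℝ, 0 < t → ∀ x y : X, 0 < P t x y)
    {s t : ℝ} (hs : 0 < s) (ht : 0 < t) (h0 : ∀ u, 0 ≤ linComb P y z α β t u) (x : X) :
    0 ≤ linComb P y z α β (s + t) x := by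
  rw [hP.linComb_add hpos hs ht]
  exact integral_nonneg fun w => mul_nonneg (hpos s hs x w).le (h0 w)

end Semigroup

section Metric

variable {X : Type*} [MetricSpace X] [MeasurableSpace X]

def HasPoissonBounds (μ : Measure X) (P : ℝ → X → X → ℝ) (C : ℝ) : Prop :=
  ∀ t : ℝ, 0 < t → ∀ x y : X,
    C⁻¹ * ((μ (closedBall x (t + dist x y))).toReal⁻¹ * (t / (t + dist x y))) ≤ P t x y ∧
    P t x y ≤ C * ((μ (closedBall x (t + dist x y))).toReal⁻¹ * (t / (t + dist x y)))

def IsComparableAtScale (P : ℝ → X → X → ℝ) (C : ℝ) : Prop :=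
  ∀ t : ℝ, 0 < t → ∀ x y z : X, dist y z ≤ t →
    C⁻¹ * P t x z ≤ P t x y ∧ P t x y ≤ C * P t x z

def IsDoubling (μ : Measure X) (C : ℝ) : Prop :=
  ∀ (x : X) (r : ℝ), 0 < r →
    (μ (closedBall x (2 * r))).toReal ≤ C * (μ (closedBall x r)).toReal

variable {μ : Measure X} {P : ℝ → X → X → ℝ}

theorem IsDoubling.measure_closedBall_two_pow_mul_le {C : ℝ} (h : IsDoubling μ C) (hC : 0 ≤ C)
    (x : X) {r : ℝ} (hr : 0 < r) (n : ℕ) :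
    (μ (closedBall x (2 ^ n * r))).toReal ≤ C ^ n * (μ (closedBall x r)).toReal := by
  induction n with
  | zero => simp
  | succ n ih =>
    calc (μ (closedBall x (2 ^ (n + 1) * r))).toReal
        = (μ (closedBall x (2 * (2 ^ n * r)))).toReal := by ring_nf
      _ ≤ C * (μ (closedBall x (2 ^ n * r))).toReal := h x _ (by positivity)
      _ ≤ C * (C ^ n * (μ (closedBall x r)).toReal) := by gcongr
      _ = C ^ (n + 1) * (μ (closedBall x r)).toReal := by ring

theorem HasPoissonBounds.pos {C : ℝ} (hP : HasPoissonBounds μ P C) (hC : 0 < C)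
    (hvol : ∀ (x : X) (r : ℝ), 0 < r → 0 < (μ (closedBall x r)).toReal)
    {t : ℝ} (ht : 0 < t) (x y : X) : 0 < P t x y := by
  have := hvol x (t + dist x y) (by positivity)
  exact lt_of_lt_of_le (by positivity) (hP t ht x y).1

/-- The volume factor can only grow with time, and `s / (s + d) ≥ (s / t) · t / (t + d)`. -/
theorem HasPoissonBounds.mul_le_of_le {C : ℝ} (hP : HasPoissonBounds μ P C) (hC : 0 < C)
    (hvol : ∀ (x : X) (r : ℝ), 0 < r → 0 < (μ (closedBall x r)).toReal)
    {s t : ℝ} (hs : 0 < s) (hst : s ≤ t) (x y : X) :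
    C⁻¹ * C⁻¹ * (s / t) * P t x y ≤ P s x y := by
  have ht : 0 < t := hs.trans_le hst
  have hd : 0 ≤ dist x y := dist_nonneg
  have hVs := hvol x (s + dist x y) (by positivity)
  have hVst : (μ (closedBall x (s + dist x y))).toReal ≤
      (μ (closedBall x (t + dist x y))).toReal :=
    ENNReal.toReal_mono (ENNReal.toReal_pos_iff.mp (hvol x _ (by positivity))).2.ne
      (measure_mono (closedBall_subset_closedBall (by linarith)))
  calc C⁻¹ * C⁻¹ * (s / t) * P t x y
      ≤ C⁻¹ * C⁻¹ * (s / t) *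
          (C * ((μ (closedBall x (t + dist x y))).toReal⁻¹ * (t / (t + dist x y)))) := by
        gcongr ?_ * ?_; exact (hP t ht x y).2
    _ = C⁻¹ * ((μ (closedBall x (t + dist x y))).toReal⁻¹ * (s / (t + dist x y))) := by
        field_simp
    _ ≤ C⁻¹ * ((μ (closedBall x (s + dist x y))).toReal⁻¹ * (s / (s + dist x y))) := by
        gcongr
    _ ≤ P s x y := (hP s hs x y).1

theorem HasPoissonBounds.inv_measure_le {C : ℝ} (hP : HasPoissonBounds μ P C) (hC : 0 < C)
    (hvol : ∀ (x : X) (r : ℝ), 0 < r → 0 < (μ (closedBall x r)).toReal)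
    {t R : ℝ} (ht : 0 < t) {x y : X} (hd : dist x y ≤ t) (hR : t + dist x y ≤ R) :
    C⁻¹ * ((μ (closedBall x R)).toReal⁻¹ / 2) ≤ P t x y := by
  have hd0 : 0 ≤ dist x y := dist_nonneg
  have hV := hvol x (t + dist x y) (by positivity)
  have hVR : (μ (closedBall x (t + dist x y))).toReal ≤ (μ (closedBall x R)).toReal :=
    ENNReal.toReal_mono (ENNReal.toReal_pos_iff.mp (hvol x R (by linarith))).2.ne
      (measure_mono (closedBall_subset_closedBall hR))
  have hhalf : (1 : ℝ) / 2 ≤ t / (t + dist x y) := by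
    rw [div_le_div_iff₀ (by norm_num) (by positivity)]; linarith
  calc C⁻¹ * ((μ (closedBall x R)).toReal⁻¹ / 2)
      = C⁻¹ * ((μ (closedBall x R)).toReal⁻¹ * (1 / 2)) := by ring
    _ ≤ C⁻¹ * ((μ (closedBall x (t + dist x y))).toReal⁻¹ * (t / (t + dist x y))) := by
        gcongr
    _ ≤ P t x y := (hP t ht x y).1

theorem mul_le_setIntegral_closedBall [OpensMeasurableSpace X] {C₁ C₂ : ℝ}
    (hP : IsKernelSemigroup μ P) (hpos : ∀ t : ℝ, 0 < t → ∀ x y : X, 0 < P t x y)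
    (hsymm : ∀ t : ℝ, 0 < t → ∀ x y : X, P t x y = P t y x)
    (hcmp : IsComparableAtScale P C₁) (hest : HasPoissonBounds μ P C₂) (hC₂ : 0 < C₂)
    (hvol : ∀ (x : X) (r : ℝ), 0 < r → 0 < (μ (closedBall x r)).toReal)
    {ρ s τ : ℝ} (hρ : 0 < ρ) (hρs : ρ ≤ s) (hρτ : ρ ≤ τ) (x z : X) :
    C₁⁻¹ * C₂⁻¹ * ((μ (closedBall z ρ)).toReal / (μ (closedBall z (τ + ρ))).toReal) / 2 *
        P s x z ≤ ∫ w in closedBall z ρ, P s x w * P τ w z ∂μ := by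
  have hs : 0 < s := hρ.trans_le hρs
  have hτ : 0 < τ := hρ.trans_le hρτ
  have hpt : ∀ w ∈ closedBall z ρ, C₁⁻¹ * P s x z *
      (C₂⁻¹ * ((μ (closedBall z (τ + ρ))).toReal⁻¹ / 2)) ≤ P s x w * P τ w z := by
    intro w hw
    have hzw : dist z w ≤ ρ := by rw [dist_comm]; exact mem_closedBall.mp hw
    rw [hsymm τ hτ w z]
    exact mul_le_mul (hcmp s hs x w z (by rw [dist_comm]; linarith)).1
      (hest.inv_measure_le hC₂ hvol hτ (by linarith) (by linarith)) (by positivity)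
      (hpos s hs x w).le
  calc _ = ∫ _ in closedBall z ρ, C₁⁻¹ * P s x z *
        (C₂⁻¹ * ((μ (closedBall z (τ + ρ))).toReal⁻¹ / 2)) ∂μ := by
        rw [setIntegral_const, smul_eq_mul, measureReal_def]; ring
    _ ≤ _ := setIntegral_mono_on
        (integrableOn_const (ENNReal.toReal_pos_iff.mp (hvol z ρ hρ)).2.ne)
        (hP.integrable_mul hpos hs hτ x z).integrableOn measurableSet_closedBall hpt

/-- Harnack inequality for nonnegative combinations: `P_s`-averages inherit the comparability of
`P_s` at scale `s`. -/
theorem IsKernelSemigroup.inv_mul_linComb_add_le (hP : IsKernelSemigroup μ P)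
    (hpos : ∀ t : ℝ, 0 < t → ∀ x y : X, 0 < P t x y)
    (hsymm : ∀ t : ℝ, 0 < t → ∀ x y : X, P t x y = P t y x) {C : ℝ}
    (hcmp : IsComparableAtScale P C) {y z : X} {α β s t : ℝ} (hs : 0 < s) (ht : 0 < t)
    (h0 : ∀ u, 0 ≤ linComb P y z α β t u) {w w' : X} (hd : dist w w' ≤ s) :
    C⁻¹ * linComb P y z α β (s + t) w' ≤ linComb P y z α β (s + t) w := by
  rw [hP.linComb_add hpos hs ht, hP.linComb_add hpos hs ht, ← integral_const_mul]
  refine integral_mono ((hP.integrable_mul_linComb hpos hs ht w').const_mul _)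
    (hP.integrable_mul_linComb hpos hs ht w) fun u => ?_
  rw [hsymm s hs w' u, hsymm s hs w u, ← mul_assoc]
  exact mul_le_mul_of_nonneg_right (hcmp s hs u w w' hd).1 (h0 u)

theorem IsKernelSemigroup.mul_le_linComb_add_of_dist_le (hP : IsKernelSemigroup μ P)
    (hpos : ∀ t : ℝ, 0 < t → ∀ x y : X, 0 < P t x y)
    (hsymm : ∀ t : ℝ, 0 < t → ∀ x y : X, P t x y = P t y x) {C : ℝ} (hC : 0 < C)
    (hcmp : IsComparableAtScale P C) {y z : X} {α β s t : ℝ} (hs : 0 < s) (ht : 0 < t)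
    (h0 : ∀ u, 0 ≤ linComb P y z α β t u) {w : X} (hd : dist w z ≤ s) :
    C⁻¹ * C⁻¹ * (linComb P y z α β (s + t) z / P (s + t) z z) * P (s + t) w z ≤
      linComb P y z α β (s + t) w := by
  have hst : 0 < s + t := by positivity
  have hzz := hpos (s + t) hst z z
  have hκ : 0 ≤ linComb P y z α β (s + t) z / P (s + t) z z :=
    div_nonneg (hP.linComb_add_nonneg hpos hs ht h0 z) hzz.le
  have hcmp_zz : C⁻¹ * P (s + t) w z ≤ P (s + t) z z := by
    rw [hsymm _ hst w z]
    exact (hcmp _ hst z z w (by rw [dist_comm]; linarith)).1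
  calc C⁻¹ * C⁻¹ * (linComb P y z α β (s + t) z / P (s + t) z z) * P (s + t) w z
      = C⁻¹ * ((linComb P y z α β (s + t) z / P (s + t) z z) * (C⁻¹ * P (s + t) w z)) := by
        ring
    _ ≤ C⁻¹ * ((linComb P y z α β (s + t) z / P (s + t) z z) * P (s + t) z z) := by
        gcongr
    _ = C⁻¹ * linComb P y z α β (s + t) z := by rw [div_mul_cancel₀ _ hzz.ne']
    _ ≤ linComb P y z α β (s + t) w := hP.inv_mul_linComb_add_le hpos hsymm hcmp hs ht h0 hd

theorem IsKernelSemigroup.mul_setIntegral_le_linComb [OpensMeasurableSpace X]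
    (hP : IsKernelSemigroup μ P) (hpos : ∀ t : ℝ, 0 < t → ∀ x y : X, 0 < P t x y)
    (hsymm : ∀ t : ℝ, 0 < t → ∀ x y : X, P t x y = P t y x) {C : ℝ} (hC : 0 < C)
    (hcmp : IsComparableAtScale P C) {y z : X} {α β r s t : ℝ} (hr : 0 < r) (hs : 0 < s)
    (ht : 0 < t) (h0 : ∀ u, 0 ≤ linComb P y z α β t u) (x : X) :
    C⁻¹ * C⁻¹ * (linComb P y z α β (r + t) z / P (r + t) z z) *
        ∫ w in closedBall z r, P s x w * P (r + t) w z ∂μ ≤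
      linComb P y z α β (s + (r + t)) x := by
  have hrt : 0 < r + t := by positivity
  rw [← integral_const_mul, hP.linComb_add hpos hs hrt]
  calc _ ≤ ∫ w in closedBall z r, P s x w * linComb P y z α β (r + t) w ∂μ := by
        refine setIntegral_mono_on
          ((hP.integrable_mul hpos hs hrt x z).const_mul _).integrableOn
          (hP.integrable_mul_linComb hpos hs hrt x).integrableOn measurableSet_closedBall
          fun w hw => ?_
        rw [mul_left_comm]
        exact mul_le_mul_of_nonneg_left
          (hP.mul_le_linComb_add_of_dist_le hpos hsymm hC hcmp hr ht h0 (mem_closedBall.mp hw))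
          (hpos s hs x w).le
    _ ≤ _ := setIntegral_le_integral (hP.integrable_mul_linComb hpos hs hrt x)
        (ae_of_all _ fun w => mul_nonneg (hpos s hs x w).le
          (hP.linComb_add_nonneg hpos hr ht h0 w))

/-- `1/8 = 1/2 · 1/4` comes from `t/(t+d) ≥ 1/2` on the ball and `(t-τ)/t ≥ 1/4`; `Cdbl²` comes from
doubling the radius `t₀/2` twice. -/
noncomputable def shrinkConst (Cdbl Cest Ccmp : ℝ) : ℝ :=
  (8 * Ccmp ^ 3 * Cest ^ 3 * Cdbl ^ 2)⁻¹

theorem shrinkConst_pos {Cdbl Cest Ccmp : ℝ} (hCdbl : 0 < Cdbl) (hCest : 0 < Cest)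
    (hCcmp : 0 < Ccmp) : 0 < shrinkConst Cdbl Cest Ccmp := by
  unfold shrinkConst; positivity

theorem IsKernelSemigroup.shrinkConst_mul_le_linComb [OpensMeasurableSpace X]
    (hP : IsKernelSemigroup μ P) (hpos : ∀ t : ℝ, 0 < t → ∀ x y : X, 0 < P t x y)
    (hsymm : ∀ t : ℝ, 0 < t → ∀ x y : X, P t x y = P t y x)
    {Cdbl Cest Ccmp : ℝ} (hCdbl : 0 < Cdbl) (hdbl : IsDoubling μ Cdbl)
    (hCest : 0 < Cest) (hest : HasPoissonBounds μ P Cest)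
    (hCcmp : 0 < Ccmp) (hcmp : IsComparableAtScale P Ccmp)
    (hvol : ∀ (x : X) (r : ℝ), 0 < r → 0 < (μ (closedBall x r)).toReal)
    {y z : X} {α β t₀ t : ℝ} (ht₀ : 0 < t₀) (h0 : ∀ u, 0 ≤ linComb P y z α β t₀ u)
    (ht : 2 * t₀ ≤ t) (x : X) :
    shrinkConst Cdbl Cest Ccmp *
        (linComb P y z α β (t₀ / 2 + t₀) z / P (t₀ / 2 + t₀) z z) * P t x z ≤
      linComb P y z α β t x := by
  set τ := t₀ / 2 + t₀ with hτ_def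
  have hτ : 0 < τ := by positivity
  set κ := linComb P y z α β τ z / P τ z z
  obtain ⟨s, rfl⟩ : ∃ s, t = s + τ := ⟨t - τ, by ring⟩
  have hs : t₀ / 2 ≤ s := by linarith
  have hs0 : 0 < s := by linarith
  have hκ : 0 ≤ κ := div_nonneg
    (hP.linComb_add_nonneg hpos (half_pos ht₀) ht₀ h0 z) (hpos τ hτ z z).le
  have hV : (Cdbl ^ 2)⁻¹ ≤
      (μ (closedBall z (t₀ / 2))).toReal / (μ (closedBall z (τ + t₀ / 2))).toReal := by
    have h4 := hdbl.measure_closedBall_two_pow_mul_le hCdbl.le z (half_pos ht₀) 2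
    rw [show (2 : ℝ) ^ 2 * (t₀ / 2) = τ + t₀ / 2 by ring] at h4
    rw [le_div_iff₀ (hvol z _ (by positivity)), inv_mul_le_iff₀ (by positivity)]
    exact h4
  have hst : 1 / 4 ≤ s / (s + τ) := by
    rw [div_le_div_iff₀ (by norm_num) (by positivity)]; linarith
  calc shrinkConst Cdbl Cest Ccmp * κ * P (s + τ) x z
      = Ccmp⁻¹ * Ccmp⁻¹ * κ * (Ccmp⁻¹ * Cest⁻¹ * (Cdbl ^ 2)⁻¹ / 2 *
          (Cest⁻¹ * Cest⁻¹ * (1 / 4) * P (s + τ) x z)) := by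
        unfold shrinkConst; field_simp; ring
    _ ≤ Ccmp⁻¹ * Ccmp⁻¹ * κ * (Ccmp⁻¹ * Cest⁻¹ * ((μ (closedBall z (t₀ / 2))).toReal /
          (μ (closedBall z (τ + t₀ / 2))).toReal) / 2 *
          (Cest⁻¹ * Cest⁻¹ * (s / (s + τ)) * P (s + τ) x z)) := by
        have := hpos (s + τ) (by positivity) x z
        gcongr
    _ ≤ Ccmp⁻¹ * Ccmp⁻¹ * κ * (Ccmp⁻¹ * Cest⁻¹ * ((μ (closedBall z (t₀ / 2))).toReal /
          (μ (closedBall z (τ + t₀ / 2))).toReal) / 2 * P s x z) := by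
        gcongr
        exact hest.mul_le_of_le hCest hvol hs0 (by linarith) x z
    _ ≤ Ccmp⁻¹ * Ccmp⁻¹ * κ * ∫ w in closedBall z (t₀ / 2), P s x w * P τ w z ∂μ := by
        gcongr
        exact mul_le_setIntegral_closedBall hP hpos hsymm hcmp hest hCest hvol (half_pos ht₀) hs
          (by linarith) x z
    _ ≤ linComb P y z α β (s + τ) x :=
        hP.mul_setIntegral_le_linComb hpos hsymm hCcmp hcmp (half_pos ht₀) hs0
          ht₀ h0 x

end Metric

theorem poisson_ratio_interval_shrinks_general
    {X : Type*} [MetricSpace X] [MeasurableSpace X] [BorelSpace X]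
    (μ : Measure X)
    (hvol : ∀ (x : X) (r : ℝ), 0 < r → 0 < (μ (closedBall x r)).toReal)
    (Cdbl : ℝ) (hCdbl : 0 < Cdbl)
    (hdouble : ∀ (x : X) (r : ℝ), 0 < r →
      (μ (closedBall x (2 * r))).toReal ≤ Cdbl * (μ (closedBall x r)).toReal)
    (P : ℝ → X → X → ℝ)
    (hPsymm : ∀ (t : ℝ), 0 < t → ∀ x y : X, P t x y = P t y x)
    (hPsemigroup : ∀ s t : ℝ, 0 < s → 0 < t → ∀ x y : X,
      P (s + t) x y = ∫ w, P s x w * P t w y ∂μ)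
    (Cest : ℝ) (hCest : 0 < Cest)
    (hPest : ∀ (t : ℝ), 0 < t → ∀ x y : X,
      Cest⁻¹ * ((μ (closedBall x (t + dist x y))).toReal⁻¹ * (t / (t + dist x y)))
          ≤ P t x y ∧
      P t x y ≤
        Cest * ((μ (closedBall x (t + dist x y))).toReal⁻¹ * (t / (t + dist x y))))
    (Ccmp : ℝ) (hCcmp : 0 < Ccmp)
    (hPcmp : ∀ (t : ℝ), 0 < t → ∀ x y z : X, dist y z ≤ t →
      Ccmp⁻¹ * P t x z ≤ P t x y ∧ P t x y ≤ Ccmp * P t x z) :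
    ∃ γ ∈ Set.Ioo (0 : ℝ) 1, ∀ (y z : X) (t₀ a₁ b₁ : ℝ), 0 < t₀ → 0 < a₁ →
      dist y z < t₀ →
      (∀ x : X, a₁ ≤ P t₀ x y / P t₀ x z ∧ P t₀ x y / P t₀ x z ≤ b₁) →
      ∃ a₂ b₂ : ℝ, a₁ ≤ a₂ ∧ b₂ ≤ b₁ ∧ b₂ - a₂ = γ * (b₁ - a₁) ∧
        ∀ t : ℝ, 2 * t₀ ≤ t →
          ∀ x : X, a₂ ≤ P t x y / P t x z ∧ P t x y / P t x z ≤ b₂ := by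
  have hsg : IsKernelSemigroup μ P := hPsemigroup
  have hest : HasPoissonBounds μ P Cest := hPest
  have hpos : ∀ t : ℝ, 0 < t → ∀ x y : X, 0 < P t x y := fun t ht => hest.pos hCest hvol ht
  set δ := min (shrinkConst Cdbl Cest Ccmp) (1 / 2)
  have hδ : 0 < δ := lt_min (shrinkConst_pos hCdbl hCest hCcmp) (by norm_num)
  refine ⟨1 - δ, ⟨by linarith [min_le_right (shrinkConst Cdbl Cest Ccmp) (1 / 2)], by linarith⟩,
    fun y z t₀ a₁ b₁ ht₀ _ _ hbd => ?_⟩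
  have hzz := hpos (t₀ / 2 + t₀) (by positivity) z z
  have hF0 (u : X) := (le_div_iff_linComb_nonneg (hpos t₀ ht₀ u z)).1 (hbd u).1
  have hH0 (u : X) := (div_le_iff_linComb_nonneg (hpos t₀ ht₀ u z)).1 (hbd u).2
  have hag := (le_div_iff_linComb_nonneg hzz).2
    (hsg.linComb_add_nonneg hpos (half_pos ht₀) ht₀ hF0 z)
  have hgb := (div_le_iff_linComb_nonneg hzz).2
    (hsg.linComb_add_nonneg hpos (half_pos ht₀) ht₀ hH0 z)
  generalize hg : P (t₀ / 2 + t₀) z y / P (t₀ / 2 + t₀) z z = g at hag hgb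
  refine ⟨a₁ + δ * (g - a₁), b₁ - δ * (b₁ - g), by nlinarith, by nlinarith, by ring,
    fun t ht x => ?_⟩
  have hF := hsg.shrinkConst_mul_le_linComb hpos hPsymm hCdbl hdouble hCest hest hCcmp hPcmp
    hvol ht₀ hF0 ht x
  have hH := hsg.shrinkConst_mul_le_linComb hpos hPsymm hCdbl hdouble hCest hest hCcmp hPcmp
    hvol ht₀ hH0 ht x
  rw [linComb_one_neg_div hzz.ne', hg] at hF
  rw [linComb_neg_one_div hzz.ne', hg] at hH
  have hz := hpos t (by linarith) x z
  have hδc : δ ≤ shrinkConst Cdbl Cest Ccmp := min_le_left _ _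
  rw [le_div_iff₀ hz, div_le_iff₀ hz]
  unfold linComb at hF hH
  constructor
  · nlinarith [mul_le_mul_of_nonneg_right hδc (mul_nonneg (sub_nonneg.2 hag) hz.le)]
  · nlinarith [mul_le_mul_of_nonneg_right hδc (mul_nonneg (sub_nonneg.2 hgb) hz.le)]

/-- Interval-shrinking lemma for ratios of Poisson kernels: there is `γ ∈ (0,1)`
such that if `a₁ ≤ P_{t₀}(x,y)/P_{t₀}(x,z) ≤ b₁` for all `x` (with `d(y,z) < t₀`),
then some subinterval `[a₂,b₂] ⊆ [a₁,b₁]` of length `γ(b₁−a₁)` contains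
`P_t(x,y)/P_t(x,z)` for all `t ≥ 2t₀` and all `x`. -/
theorem poisson_ratio_interval_shrinks
    {X : Type*} [MetricSpace X] [MeasurableSpace X] [BorelSpace X]
    (μ : Measure X)
    (hvol : ∀ (x : X) (r : ℝ), 0 < r → 0 < (μ (closedBall x r)).toReal)
    (Cdbl : ℝ) (hCdbl : 0 < Cdbl)
    (hdouble : ∀ (x : X) (r : ℝ), 0 < r →
      (μ (closedBall x (2 * r))).toReal ≤ Cdbl * (μ (closedBall x r)).toReal)
    (P : ℝ → X → X → ℝ)
    (hPnonneg : ∀ (t : ℝ), 0 < t → ∀ x y : X, 0 ≤ P t x y)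
    (hPsymm : ∀ (t : ℝ), 0 < t → ∀ x y : X, P t x y = P t y x)
    (hPsemigroup : ∀ s t : ℝ, 0 < s → 0 < t → ∀ x y : X,
      P (s + t) x y = ∫ w, P s x w * P t w y ∂μ)
    (Cest : ℝ) (hCest : 0 < Cest)
    (hPest : ∀ (t : ℝ), 0 < t → ∀ x y : X,
      Cest⁻¹ * ((μ (closedBall x (t + dist x y))).toReal⁻¹ * (t / (t + dist x y)))
          ≤ P t x y ∧
      P t x y ≤
        Cest * ((μ (closedBall x (t + dist x y))).toReal⁻¹ * (t / (t + dist x y))))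
    (Ccmp : ℝ) (hCcmp : 0 < Ccmp)
    (hPcmp : ∀ (t : ℝ), 0 < t → ∀ x y z : X, dist y z ≤ t →
      Ccmp⁻¹ * P t x z ≤ P t x y ∧ P t x y ≤ Ccmp * P t x z) :
    ∃ γ ∈ Set.Ioo (0 : ℝ) 1, ∀ (y z : X) (t₀ a₁ b₁ : ℝ), 0 < t₀ → 0 < a₁ →
      dist y z < t₀ →
      (∀ x : X, a₁ ≤ P t₀ x y / P t₀ x z ∧ P t₀ x y / P t₀ x z ≤ b₁) →
      ∃ a₂ b₂ : ℝ, a₁ ≤ a₂ ∧ b₂ ≤ b₁ ∧ b₂ - a₂ = γ * (b₁ - a₁) ∧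
        ∀ t : ℝ, 2 * t₀ ≤ t →
          ∀ x : X, a₂ ≤ P t x y / P t x z ∧ P t x y / P t x z ≤ b₂ :=
  poisson_ratio_interval_shrinks_general μ hvol Cdbl hCdbl hdouble P hPsymm hPsemigroup Cest hCest
    hPest Ccmp hCcmp hPcmp
end

section
/- Define T̃(r,x,y) = T_t(x,y) where t = t(x,r) satisfies μ(B(x,√t)) = r. Then for every δ > 0 there is C > 0 such that 0 ≤ T̃(r,x,y) ≤ C·r^{-1}·(1 + d̃(x,y)/r)^{-1-δ} for all x,y ∈ X and r > 0. -/
open MeasureTheory Metric Real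

/-! With `s = d(x,y)/√t`, the Gaussian factor of the upper bound is `exp(-c₂ s²)`. If `s ≤ 1`
then `d̃(x,y) ≤ μ(B(x,√t)) = r`, so `1 + d̃/r ≤ 2`; if `s ≥ 1`, doubling gives
`1 + d̃/r ≤ (1 + C_d) s^q`. In both cases `(1 + d̃/r)^{1+δ} exp(-c₂ s²)` is bounded, since the
Gaussian beats every power of `s`. -/

theorem exp_neg_le_factorial_div_pow {x : ℝ} (hx : 0 < x) (n : ℕ) :
    exp (-x) ≤ n.factorial / x ^ n := by
  rw [exp_neg, ← inv_div]
  exact inv_anti₀ (by positivity) (pow_div_factorial_le_exp x hx.le n)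

theorem exists_exp_neg_mul_sq_le_mul_rpow_neg {c : ℝ} (hc : 0 < c) (α : ℝ) :
    ∃ K > 0, ∀ s ≥ (1 : ℝ), exp (-(c * s ^ 2)) ≤ K * s ^ (-α) := by
  obtain ⟨n, hn⟩ : ∃ n : ℕ, α ≤ 2 * n := by
    obtain ⟨n, hn⟩ := exists_nat_ge (α / 2)
    exact ⟨n, by linarith⟩
  refine ⟨n.factorial / c ^ n, by positivity, fun s hs => ?_⟩
  have hs0 : 0 < s := one_pos.trans_le hs
  calc exp (-(c * s ^ 2)) ≤ n.factorial / (c * s ^ 2) ^ n :=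
        exp_neg_le_factorial_div_pow (by positivity) n
    _ = n.factorial / c ^ n * s ^ (-(2 * n : ℝ)) := by
        rw [rpow_neg hs0.le, show (2 * n : ℝ) = ((2 * n : ℕ) : ℝ) by push_cast; ring,
          rpow_natCast, mul_pow, ← pow_mul]
        field_simp
    _ ≤ n.factorial / c ^ n * s ^ (-α) := by gcongr

theorem exists_rpow_mul_exp_neg_mul_sq_le {c A q p : ℝ} (hc : 0 < c) (hA : 0 ≤ A) (hp : 0 ≤ p) :
    ∃ M > 0, ∀ s b : ℝ, 0 ≤ b → (s ≤ 1 → b ≤ 2) → (1 ≤ s → b ≤ A * s ^ q) →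
      b ^ p * exp (-(c * s ^ 2)) ≤ M := by
  obtain ⟨K, hK, hgauss⟩ := exists_exp_neg_mul_sq_le_mul_rpow_neg hc (q * p)
  refine ⟨2 ^ p + K * A ^ p, by positivity, fun s b hb hnear hfar => ?_⟩
  rcases le_total s 1 with hs | hs
  · have hexp : exp (-(c * s ^ 2)) ≤ 1 := exp_le_one_iff.mpr (by nlinarith [sq_nonneg s])
    calc b ^ p * exp (-(c * s ^ 2)) ≤ 2 ^ p * 1 := by
          gcongr
          exact hnear hs
      _ ≤ 2 ^ p + K * A ^ p := by simp only [mul_one, le_add_iff_nonneg_right]; positivity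
  · have hs0 : 0 < s := one_pos.trans_le hs
    have hpow : b ^ p ≤ A ^ p * s ^ (q * p) := by
      calc b ^ p ≤ (A * s ^ q) ^ p := rpow_le_rpow hb (hfar hs) hp
        _ = A ^ p * s ^ (q * p) := by rw [mul_rpow hA (by positivity), ← rpow_mul hs0.le]
    calc b ^ p * exp (-(c * s ^ 2)) ≤ (A ^ p * s ^ (q * p)) * (K * s ^ (-(q * p))) := by
          gcongr
          exact hgauss s hs
      _ = K * A ^ p := by
          rw [rpow_neg hs0.le]
          field_simp
      _ ≤ 2 ^ p + K * A ^ p := by simp only [le_add_iff_nonneg_left]; positivity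

section

variable {X : Type*} [MetricSpace X] [MeasurableSpace X] {μ : Measure X}

theorem measure_closedBall_toReal_mono {x : X} {a b : ℝ} (hab : a ≤ b)
    (hb : μ (closedBall x b) ≠ ⊤) :
    (μ (closedBall x a)).toReal ≤ (μ (closedBall x b)).toReal :=
  ENNReal.toReal_mono hb (measure_mono (closedBall_subset_closedBall hab))

theorem one_add_div_le_two_of_dist_le {x y : X} {D r ρ : ℝ} (hr : 0 < r)
    (hρ : (μ (closedBall x ρ)).toReal = r) (hD : D ≤ (μ (closedBall x (dist x y))).toReal)
    (hxy : dist x y ≤ ρ) :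
    1 + D / r ≤ 2 := by
  have hfin : μ (closedBall x ρ) ≠ ⊤ := fun h => by simp [h, hr.ne] at hρ
  have : D / r ≤ 1 := by
    rw [div_le_one hr, ← hρ]
    exact hD.trans (measure_closedBall_toReal_mono hxy hfin)
  linarith

theorem one_add_div_le_mul_rpow_of_le_dist {Cd q : ℝ} (hq : 0 ≤ q)
    (hdouble : ∀ (x : X) (r s : ℝ), 0 < r → 1 ≤ s →
      (μ (closedBall x (s * r))).toReal ≤ Cd * s ^ q * (μ (closedBall x r)).toReal)
    {x y : X} {D r ρ : ℝ} (hr : 0 < r) (hρ0 : 0 < ρ)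
    (hρ : (μ (closedBall x ρ)).toReal = r) (hD : D ≤ (μ (closedBall x (dist x y))).toReal)
    (hxy : 1 ≤ dist x y / ρ) :
    1 + D / r ≤ (1 + Cd) * (dist x y / ρ) ^ q := by
  set s := dist x y / ρ
  have hdoubled : D ≤ Cd * s ^ q * r := by
    calc D ≤ (μ (closedBall x (s * ρ))).toReal := by rwa [div_mul_cancel₀ _ hρ0.ne']
      _ ≤ Cd * s ^ q * r := hρ ▸ hdouble x ρ s hρ0 hxy
  have hsq : 1 ≤ s ^ q := one_le_rpow hxy hq
  have : D / r ≤ Cd * s ^ q := by rwa [div_le_iff₀ hr]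
  linarith

end

theorem rescaled_kernel_upper_estimate_general
    {X : Type*} [MetricSpace X] [MeasurableSpace X]
    (μ : Measure X)
    (Cd q : ℝ) (hCd : 0 < Cd) (hq : 0 < q)
    (hdouble : ∀ (x : X) (r s : ℝ), 0 < r → 1 ≤ s →
      (μ (closedBall x (s * r))).toReal ≤ Cd * s ^ q * (μ (closedBall x r)).toReal)
    (dt : X → X → ℝ)
    (Cb : ℝ) (hCb : 0 < Cb)
    (hdt : ∀ x y : X,
      Cb⁻¹ * (μ (closedBall x (dist x y))).toReal ≤ dt x y ∧
      dt x y ≤ (μ (closedBall x (dist x y))).toReal)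
    (T : ℝ → X → X → ℝ)
    (hTnonneg : ∀ (t : ℝ), 0 < t → ∀ x y : X, 0 ≤ T t x y)
    (C₀ c₂ : ℝ) (hC₀ : 0 < C₀) (hc₂ : 0 < c₂)
    (hupper : ∀ (t : ℝ), 0 < t → ∀ x y : X,
      T t x y ≤ C₀ / (μ (closedBall x (Real.sqrt t))).toReal *
          Real.exp (-c₂ * dist x y ^ 2 / t)) :
    ∀ δ > (0 : ℝ), ∃ C > (0 : ℝ), ∀ (x y : X) (r t : ℝ), 0 < r → 0 < t →
      (μ (closedBall x (Real.sqrt t))).toReal = r →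
      0 ≤ T t x y ∧
      T t x y ≤ C * r⁻¹ * (1 + dt x y / r) ^ (-(1 + δ)) := by
  intro δ hδ
  obtain ⟨M, hM, hdecay⟩ := exists_rpow_mul_exp_neg_mul_sq_le (q := q) hc₂
    (by linarith : 0 ≤ 1 + Cd) (by linarith : 0 ≤ 1 + δ)
  refine ⟨C₀ * M, by positivity, fun x y r t hr ht hrt => ⟨hTnonneg t ht x y, ?_⟩⟩
  have hsqrt : 0 < √t := sqrt_pos.mpr ht
  have hD : 0 ≤ dt x y := le_trans (by positivity) (hdt x y).1
  set b := 1 + dt x y / r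
  have hb : 0 < b := by positivity
  have hbound : b ^ (1 + δ) * exp (-(c₂ * (dist x y / √t) ^ 2)) ≤ M :=
    hdecay _ _ hb.le
      (fun h => one_add_div_le_two_of_dist_le hr hrt (hdt x y).2 ((div_le_one hsqrt).mp h))
      (one_add_div_le_mul_rpow_of_le_dist hq.le hdouble hr hsqrt hrt (hdt x y).2)
  have hgauss : -c₂ * dist x y ^ 2 / t = -(c₂ * (dist x y / √t) ^ 2) := by
    rw [div_pow, sq_sqrt ht.le]; ring
  calc T t x y ≤ C₀ / r * exp (-(c₂ * (dist x y / √t) ^ 2)) := by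
        rw [← hgauss, ← hrt]; exact hupper t ht x y
    _ ≤ C₀ / r * (M / b ^ (1 + δ)) := by
        gcongr
        rw [le_div_iff₀ (by positivity), mul_comm]
        exact hbound
    _ = C₀ * M * r⁻¹ * b ^ (-(1 + δ)) := by rw [rpow_neg hb.le]; ring

/-- Upper estimate (U₂) for the rescaled kernel `T̃(r,x,y) = T_{t(x,r)}(x,y)`,
where `μ(B(x,√t)) = r`: for every `δ > 0`,
`0 ≤ T̃(r,x,y) ≤ C r⁻¹ (1 + d̃(x,y)/r)^{-1-δ}`. -/
theorem rescaled_kernel_upper_estimate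
    {X : Type*} [MetricSpace X] [MeasurableSpace X] [BorelSpace X]
    (μ : Measure X)
    (hvol : ∀ (x : X) (r : ℝ), 0 < r → 0 < (μ (closedBall x r)).toReal)
    (Cd q : ℝ) (hCd : 0 < Cd) (hq : 0 < q)
    (hdouble : ∀ (x : X) (r s : ℝ), 0 < r → 1 ≤ s →
      (μ (closedBall x (s * r))).toReal ≤ Cd * s ^ q * (μ (closedBall x r)).toReal)
    (hΦ : ∀ x : X, Set.BijOn (fun u : ℝ => (μ (closedBall x u)).toReal)
      (Set.Ioi 0) (Set.Ioi 0))
    (dt : X → X → ℝ)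
    (Cb : ℝ) (hCb : 0 < Cb)
    (hdt : ∀ x y : X,
      Cb⁻¹ * (μ (closedBall x (dist x y))).toReal ≤ dt x y ∧
      dt x y ≤ (μ (closedBall x (dist x y))).toReal)
    (T : ℝ → X → X → ℝ)
    (hTnonneg : ∀ (t : ℝ), 0 < t → ∀ x y : X, 0 ≤ T t x y)
    (C₀ c₂ : ℝ) (hC₀ : 0 < C₀) (hc₂ : 0 < c₂)
    (hupper : ∀ (t : ℝ), 0 < t → ∀ x y : X,
      T t x y ≤ C₀ / (μ (closedBall x (Real.sqrt t))).toReal *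
          Real.exp (-c₂ * dist x y ^ 2 / t)) :
    ∀ δ > (0 : ℝ), ∃ C > (0 : ℝ), ∀ (x y : X) (r t : ℝ), 0 < r → 0 < t →
      (μ (closedBall x (Real.sqrt t))).toReal = r →
      0 ≤ T t x y ∧
      T t x y ≤ C * r⁻¹ * (1 + dt x y / r) ^ (-(1 + δ)) :=
  rescaled_kernel_upper_estimate_general μ Cd q hCd hq hdouble dt Cb hCb hdt T hTnonneg C₀ c₂ hC₀
    hc₂ hupper
end

section
/- For d(y,z) ≤ √t one has the estimate d(y,z)/√t ≤ C·(d̃(y,z)/r)^{1/q}·(1 + d(x,y)/√t), where r = μ(B(x,√t)) and C depends only on the doubling constants. -/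
open MeasureTheory Metric

/-
Put `d = d(y,z)` and `R = d(x,y) + √t`. The ball `B(x,√t)` lies in `B(y,R)`, and doubling from
radius `d` up to radius `R ≥ d` gives
`r ≤ C_d (R/d)^q μ(B(y,d)) ≤ C_b C_d (R/d)^q d̃(y,z)`.
Solving for `d/R` yields `d/R ≤ (C_b C_d d̃(y,z)/r)^{1/q}`, and
`d/√t = (d/R)(1 + d(x,y)/√t)`.
-/

lemma div_le_rpow_one_div_of_le_mul_div_rpow {d R r K D q : ℝ} (hd : 0 < d) (hR : 0 < R)
    (hr : 0 < r) (hK : 0 ≤ K) (hD : 0 ≤ D) (hq : 0 < q) (h : r ≤ K * (R / d) ^ q * D) :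
    d / R ≤ K ^ (1 / q) * (D / r) ^ (1 / q) := by
  have hRd : 0 < (R / d) ^ q := Real.rpow_pos_of_pos (div_pos hR hd) q
  have hpow : (d / R) ^ q = ((R / d) ^ q)⁻¹ := by
    rw [← inv_div, Real.inv_rpow (div_pos hR hd).le]
  rw [← Real.mul_rpow hK (div_nonneg hD hr.le), one_div,
    Real.le_rpow_inv_iff_of_pos (div_pos hd hR).le (by positivity) hq, hpow,
    inv_le_iff_one_le_mul₀ hRd, mul_div_assoc', div_mul_eq_mul_div, le_div_iff₀ hr]
  linarith

section Doubling

variable {X : Type*} [MetricSpace X] [MeasurableSpace X] {μ : Measure X}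

lemma measure_closedBall_toReal_le_of_subset_closedBall
    (hvol : ∀ (x : X) (r : ℝ), 0 < r → 0 < (μ (closedBall x r)).toReal)
    {x y : X} {s R : ℝ} (hR : 0 < R) (hsub : s + dist x y ≤ R) :
    (μ (closedBall x s)).toReal ≤ (μ (closedBall y R)).toReal :=
  ENNReal.toReal_mono (ENNReal.toReal_pos_iff.1 (hvol y R hR)).2.ne
    (measure_mono (closedBall_subset_closedBall' hsub))

lemma measure_closedBall_toReal_le_of_le {Cd q : ℝ}
    (hdouble : ∀ (x : X) (r s : ℝ), 0 < r → 1 ≤ s →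
      (μ (closedBall x (s * r))).toReal ≤ Cd * s ^ q * (μ (closedBall x r)).toReal)
    (y : X) {d R : ℝ} (hd : 0 < d) (hdR : d ≤ R) :
    (μ (closedBall y R)).toReal ≤ Cd * (R / d) ^ q * (μ (closedBall y d)).toReal := by
  simpa only [div_mul_cancel₀ R hd.ne'] using
    hdouble y d (R / d) hd ((one_le_div₀ hd).2 hdR)

lemma measure_closedBall_toReal_le_dtilde
    (hvol : ∀ (x : X) (r : ℝ), 0 < r → 0 < (μ (closedBall x r)).toReal)
    {Cd q : ℝ} (hCd : 0 < Cd)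
    (hdouble : ∀ (x : X) (r s : ℝ), 0 < r → 1 ≤ s →
      (μ (closedBall x (s * r))).toReal ≤ Cd * s ^ q * (μ (closedBall x r)).toReal)
    {dt : X → X → ℝ} {Cb : ℝ} (hCb : 0 < Cb)
    (hdt : ∀ x y : X, Cb⁻¹ * (μ (closedBall x (dist x y))).toReal ≤ dt x y)
    {x y z : X} {s : ℝ} (hs : 0 < s) (hyz : 0 < dist y z) (hyzs : dist y z ≤ s) :
    (μ (closedBall x s)).toReal ≤ Cb * Cd * ((dist x y + s) / dist y z) ^ q * dt y z := by
  have hR : 0 < dist x y + s := by positivity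
  have hball : (μ (closedBall y (dist y z))).toReal ≤ Cb * dt y z := by
    rw [← inv_mul_le_iff₀ hCb]
    exact hdt y z
  calc (μ (closedBall x s)).toReal ≤ (μ (closedBall y (dist x y + s))).toReal :=
        measure_closedBall_toReal_le_of_subset_closedBall hvol hR (by rw [add_comm])
    _ ≤ Cd * ((dist x y + s) / dist y z) ^ q * (μ (closedBall y (dist y z))).toReal :=
        measure_closedBall_toReal_le_of_le hdouble y hyz
          (by linarith [dist_nonneg (x := x) (y := y)])
    _ ≤ Cd * ((dist x y + s) / dist y z) ^ q * (Cb * dt y z) := by gcongr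
    _ = Cb * Cd * ((dist x y + s) / dist y z) ^ q * dt y z := by ring

end Doubling

theorem dist_ratio_le_dtilde_ratio_general
    {X : Type*} [MetricSpace X] [MeasurableSpace X]
    (μ : Measure X)
    (hvol : ∀ (x : X) (r : ℝ), 0 < r → 0 < (μ (closedBall x r)).toReal)
    (Cd q : ℝ) (hCd : 0 < Cd) (hq : 0 < q)
    (hdouble : ∀ (x : X) (r s : ℝ), 0 < r → 1 ≤ s →
      (μ (closedBall x (s * r))).toReal ≤ Cd * s ^ q * (μ (closedBall x r)).toReal)
    (dt : X → X → ℝ)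
    (Cb : ℝ) (hCb : 0 < Cb)
    (hdt : ∀ x y : X,
      Cb⁻¹ * (μ (closedBall x (dist x y))).toReal ≤ dt x y ∧
      dt x y ≤ (μ (closedBall x (dist x y))).toReal) :
    ∃ C > (0 : ℝ), ∀ (x y z : X) (t r : ℝ), 0 < t → dist y z ≤ Real.sqrt t →
      r = (μ (closedBall x (Real.sqrt t))).toReal →
      dist y z / Real.sqrt t ≤
        C * (dt y z / r) ^ (1 / q) * (1 + dist x y / Real.sqrt t) := by
  refine ⟨(Cb * Cd) ^ (1 / q), by positivity, fun x y z t r ht hyzt hr => ?_⟩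
  have hs : 0 < Real.sqrt t := Real.sqrt_pos.2 ht
  have hr_pos : 0 < r := hr ▸ hvol x _ hs
  have hdt_nonneg : 0 ≤ dt y z := le_trans (by positivity) (hdt y z).1
  rcases (dist_nonneg : 0 ≤ dist y z).eq_or_lt with hyz | hyz
  · rw [← hyz, zero_div]
    have := Real.rpow_nonneg (div_nonneg hdt_nonneg hr_pos.le) (1 / q)
    positivity
  have hR : 0 < dist x y + Real.sqrt t := by positivity
  have hratio :
      dist y z / (dist x y + Real.sqrt t) ≤ (Cb * Cd) ^ (1 / q) * (dt y z / r) ^ (1 / q) :=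
    div_le_rpow_one_div_of_le_mul_div_rpow hyz hR hr_pos (by positivity) hdt_nonneg hq
      (hr ▸ measure_closedBall_toReal_le_dtilde hvol hCd hdouble hCb (fun a b => (hdt a b).1)
        hs hyz hyzt)
  calc dist y z / Real.sqrt t
      = dist y z / (dist x y + Real.sqrt t) * (1 + dist x y / Real.sqrt t) := by
        field_simp
        ring
    _ ≤ _ := by gcongr

/-- If `d(y,z) ≤ √t` and `r = μ(B(x,√t))`, then
`d(y,z)/√t ≤ C (d̃(y,z)/r)^{1/q} (1 + d(x,y)/√t)`. -/
theorem dist_ratio_le_dtilde_ratio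
    {X : Type*} [MetricSpace X] [MeasurableSpace X] [BorelSpace X]
    (μ : Measure X)
    (hvol : ∀ (x : X) (r : ℝ), 0 < r → 0 < (μ (closedBall x r)).toReal)
    (Cd q : ℝ) (hCd : 0 < Cd) (hq : 0 < q)
    (hdouble : ∀ (x : X) (r s : ℝ), 0 < r → 1 ≤ s →
      (μ (closedBall x (s * r))).toReal ≤ Cd * s ^ q * (μ (closedBall x r)).toReal)
    (dt : X → X → ℝ)
    (Cb : ℝ) (hCb : 0 < Cb)
    (hdt : ∀ x y : X,
      Cb⁻¹ * (μ (closedBall x (dist x y))).toReal ≤ dt x y ∧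
      dt x y ≤ (μ (closedBall x (dist x y))).toReal) :
    ∃ C > (0 : ℝ), ∀ (x y z : X) (t r : ℝ), 0 < t → dist y z ≤ Real.sqrt t →
      r = (μ (closedBall x (Real.sqrt t))).toReal →
      dist y z / Real.sqrt t ≤
        C * (dt y z / r) ^ (1 / q) * (1 + dist x y / Real.sqrt t) :=
  dist_ratio_le_dtilde_ratio_general μ hvol Cd q hCd hq hdouble dt Cb hCb hdt
end
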